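/- arXiv:2205.06838 — 9 statements merged into one kernel-verified Lean document; each statement's English description precedes it below -/
import Mathlib

section
/- Let X be a Banach space with a semi-normalized Markushevich basis (e_n) with biorthogonal functionals (e_n^*). Fix m ∈ ℕ and define k_m^c = sup{‖I − P_A‖ : A ⊂ ℕ, |A| ≤ m}, where P_A(x) = ∑_{n∈A} e_n^*(x) e_n. Let J ⊂ ℕ with |J| ≤ m, and let (a_n)_{n∈J}, (b_n)_{n∈J} be real scalars with |a_n| ≤ |b_n| for all n ∈ J and sgn(a_n) = sgn(b_n) whenever a_n b_n ≠ 0. Then for every x ∈ X with supp(x) ∩ J = ∅, one has ‖x + ∑_{n∈J} a_n e_n‖ ≤ k_m^c ‖x + ∑_{n∈J} b_n e_n‖. -/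
/-! With `y = x + ∑_{n ∈ J} b_n e_n`, the coordinates of `y` on `J` are the `b_n`, so for every
`S ⊆ J` the vector `(I - P_{J \ S}) y = x + ∑_{n ∈ S} b_n e_n` has norm at most `k_m^c ‖y‖`.
The hypotheses on `a` and `b` say exactly that `a_n = t_n b_n` with `t_n ∈ [0, 1]`, so
`x + ∑_{n ∈ J} a_n e_n` is a convex combination of these vectors, and the bound passes to it
by the triangle inequality. -/

open Finset

theorem exists_mem_Icc_eq_mul_of_abs_le {a b : ℝ} (hab : |a| ≤ |b|)
    (hsgn : a * b ≠ 0 → Real.sign a = Real.sign b) : ∃ t ∈ Set.Icc (0 : ℝ) 1, a = t * b := by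
  rcases eq_or_ne b 0 with rfl | hb
  · exact ⟨0, by simp, by simpa using hab⟩
  have hab_nonneg : 0 ≤ a * b := by
    rcases eq_or_ne a 0 with rfl | ha
    · simp
    have hs := hsgn (mul_ne_zero ha hb)
    rcases ha.lt_or_gt with ha | ha <;> rcases hb.lt_or_gt with hb | hb <;>
      simp [Real.sign_of_neg, Real.sign_of_pos, ha, hb] at hs ⊢ <;> nlinarith
  refine ⟨a / b, ⟨?_, ?_⟩, (div_mul_cancel₀ a hb).symm⟩
  · rw [show a / b = a * b / (b * b) by field_simp]
    exact div_nonneg hab_nonneg (mul_self_nonneg b)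
  · exact (le_abs_self _).trans (by rwa [abs_div, div_le_one (abs_pos.2 hb)])

theorem norm_add_sum_smul_le_of_forall_subset {E ι : Type*} [SeminormedAddCommGroup E]
    [NormedSpace ℝ E] [DecidableEq ι] (J : Finset ι) (v : ι → E) (t : ι → ℝ)
    (ht : ∀ n ∈ J, t n ∈ Set.Icc (0 : ℝ) 1) {C : ℝ} (w : E)
    (hC : ∀ S ⊆ J, ‖w + ∑ n ∈ S, v n‖ ≤ C) :
    ‖w + ∑ n ∈ J, t n • v n‖ ≤ C := by
  induction J using Finset.induction_on generalizing w with
  | empty => simpa using hC ∅ le_rfl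
  | @insert j J hj ih =>
    obtain ⟨htj0, htj1⟩ := ht j (mem_insert_self j J)
    have ht' : ∀ n ∈ J, t n ∈ Set.Icc (0 : ℝ) 1 := fun n hn => ht n (mem_insert_of_mem hn)
    have h_without := ih ht' w fun S hS => hC S (hS.trans (subset_insert j J))
    have h_with := ih ht' (w + v j) fun S hS => by
      have hjS : j ∉ S := fun h => hj (hS h)
      simpa [sum_insert hjS, add_assoc, add_left_comm] using
        hC (insert j S) (insert_subset_insert j hS)
    have hcomb : w + ∑ n ∈ insert j J, t n • v n
        = t j • (w + v j + ∑ n ∈ J, t n • v n) + (1 - t j) • (w + ∑ n ∈ J, t n • v n) := by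
      rw [sum_insert hj]
      module
    calc ‖w + ∑ n ∈ insert j J, t n • v n‖
        ≤ t j * ‖w + v j + ∑ n ∈ J, t n • v n‖ + (1 - t j) * ‖w + ∑ n ∈ J, t n • v n‖ := by
          rw [hcomb]
          refine (norm_add_le _ _).trans_eq ?_
          rw [norm_smul_of_nonneg htj0, norm_smul_of_nonneg (sub_nonneg.2 htj1)]
      _ ≤ t j * C + (1 - t j) * C := by gcongr
      _ = C := by ring

section Biorthogonal

variable {X : Type*} [NormedAddCommGroup X] [NormedSpace ℝ X] {e : ℕ → X} {f : ℕ → X →L[ℝ] ℝ}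

theorem apply_add_sum_smul_of_biorthogonal (hbi : ∀ i j, f i (e j) = if i = j then (1 : ℝ) else 0)
    {J : Finset ℕ} {x : X} (hx : ∀ n ∈ J, f n x = 0) (c : ℕ → ℝ) {n : ℕ} (hn : n ∈ J) :
    f n (x + ∑ k ∈ J, c k • e k) = c n := by
  simp [hbi, hx n hn, hn]

theorem sub_sum_sdiff_of_biorthogonal (hbi : ∀ i j, f i (e j) = if i = j then (1 : ℝ) else 0)
    {J S : Finset ℕ} (hS : S ⊆ J) {x : X} (hx : ∀ n ∈ J, f n x = 0) (c : ℕ → ℝ) :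
    x + ∑ k ∈ J, c k • e k - ∑ n ∈ J \ S, f n (x + ∑ k ∈ J, c k • e k) • e n
      = x + ∑ n ∈ S, c n • e n := by
  have hcoord : ∑ n ∈ J \ S, f n (x + ∑ k ∈ J, c k • e k) • e n = ∑ n ∈ J \ S, c n • e n :=
    sum_congr rfl fun n hn => by rw [apply_add_sum_smul_of_biorthogonal hbi hx c (mem_sdiff.1 hn).1]
  rw [hcoord, ← sum_sdiff hS]
  abel

end Biorthogonal

theorem stmt_0_general
    {X : Type*} [NormedAddCommGroup X] [NormedSpace ℝ X]
    (e : ℕ → X) (f : ℕ → X →L[ℝ] ℝ)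
    (hbi : ∀ i j, f i (e j) = if i = j then (1 : ℝ) else 0)
    (m : ℕ) (kc : ℝ)
    (hkc : ∀ A : Finset ℕ, A.card ≤ m → ∀ x : X,
      ‖x - ∑ n ∈ A, f n x • e n‖ ≤ kc * ‖x‖)
    (J : Finset ℕ) (hJ : J.card ≤ m)
    (a b : ℕ → ℝ)
    (hab : ∀ n ∈ J, |a n| ≤ |b n|)
    (hsgn : ∀ n ∈ J, a n * b n ≠ 0 → Real.sign (a n) = Real.sign (b n))
    (x : X) (hx : ∀ n ∈ J, f n x = 0) :
    ‖x + ∑ n ∈ J, a n • e n‖ ≤ kc * ‖x + ∑ n ∈ J, b n • e n‖ := by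
  classical
  choose! t ht hat using fun n hn => exists_mem_Icc_eq_mul_of_abs_le (hab n hn) (hsgn n hn)
  have hvertex : ∀ S ⊆ J, ‖x + ∑ n ∈ S, b n • e n‖ ≤ kc * ‖x + ∑ n ∈ J, b n • e n‖ := by
    intro S hS
    rw [← sub_sum_sdiff_of_biorthogonal hbi hS hx b]
    exact hkc _ ((card_le_card sdiff_subset).trans hJ) _
  have hsum : ∑ n ∈ J, a n • e n = ∑ n ∈ J, t n • (b n • e n) :=
    sum_congr rfl fun n hn => by rw [hat n hn, mul_smul]
  rw [hsum]
  exact norm_add_sum_smul_le_of_forall_subset J _ t ht x hvertex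

/-- Proposition 2.1 (first part): bounding perturbed sums via the
complemented unconditionality constant `k_m^c`. -/
theorem stmt_0
    {X : Type*} [NormedAddCommGroup X] [NormedSpace ℝ X] [CompleteSpace X]
    (e : ℕ → X) (f : ℕ → X →L[ℝ] ℝ)
    (hbi : ∀ i j, f i (e j) = if i = j then (1 : ℝ) else 0)
    (htotal : ∀ x : X, (∀ n, f n x = 0) → x = 0)
    (hdense : Dense (Submodule.span ℝ (Set.range e) : Set X))
    (m : ℕ) (kc : ℝ)
    (hkc : ∀ A : Finset ℕ, A.card ≤ m → ∀ x : X,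
      ‖x - ∑ n ∈ A, f n x • e n‖ ≤ kc * ‖x‖)
    (J : Finset ℕ) (hJ : J.card ≤ m)
    (a b : ℕ → ℝ)
    (hab : ∀ n ∈ J, |a n| ≤ |b n|)
    (hsgn : ∀ n ∈ J, a n * b n ≠ 0 → Real.sign (a n) = Real.sign (b n))
    (x : X) (hx : ∀ n ∈ J, f n x = 0) :
    ‖x + ∑ n ∈ J, a n • e n‖ ≤ kc * ‖x + ∑ n ∈ J, b n • e n‖ :=
  stmt_0_general e f hbi m kc hkc J hJ a b hab hsgn x hx
end

section
/- Let X be a Banach space with Markushevich basis (e_n), let τ ∈ (0,1], m ∈ ℕ, and α ≥ 0. Define g_{m,τ}^c = sup{‖x − P_Λ(x)‖/‖x‖ : x ∈ X, Λ a τ-weak greedy set of x with |Λ| ≤ m}, where Λ is τ-weak greedy for x if min_{n∈Λ}|e_n^*(x)| ≥ τ · max_{n∉Λ}|e_n^*(x)|. Then for any x ∈ X with ‖x‖_∞ := sup_n |e_n^*(x)| ≤ α/τ, any finite A ⊂ ℕ with |A| ≤ m and A ∩ supp(x) = ∅, any signs (ε_n)_{n∈A} with |ε_n| = 1, and any real scalars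 (a_n)_{n∈A} with a_n ≥ α, one has ‖x + α ∑_{n∈A} ε_n e_n‖ ≤ g_{m,τ}^c ‖x + ∑_{n∈A} ε_n a_n e_n‖. -/
/-!
Write `y = x + ∑_{n ∈ A} ε_n a_n e_n` and induct on `A`, always removing an index `n₀` with the
smallest coefficient `β = a_{n₀}`. Since `|e_n^*(y)| = a_n ≥ α ≥ τ |e_n^*(x)|` on `A`, the set `A`
is `τ`-weak greedy for `y` with residual `x`, so `‖x‖ ≤ g ‖y‖`. Moving `ε_{n₀} β e_{n₀}` into `x`
and applying the induction hypothesis at level `β` gives `‖x + β ∑_A ε_n e_n‖ ≤ g ‖y‖`. The vector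
`x + α ∑_A ε_n e_n` lies on the segment between these two, and balls are convex.
-/

open Finset

section Biorthogonal

variable {X : Type*} [NormedAddCommGroup X] [NormedSpace ℝ X] {e : ℕ → X} {f : ℕ → X →L[ℝ] ℝ}

def IsWeakGreedySet (f : ℕ → X →L[ℝ] ℝ) (τ : ℝ) (x : X) (Λ : Finset ℕ) : Prop :=
  ∀ i ∈ Λ, ∀ j ∉ Λ, τ * |f j x| ≤ |f i x|

/-- `g` bounds the residuals `x - P_Λ x` over the `τ`-weak greedy sets `Λ` of size at most `m`,
i.e. `g_{m,τ}^c ≤ g`. -/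
def WeakGreedyResidualBound (e : ℕ → X) (f : ℕ → X →L[ℝ] ℝ) (τ : ℝ) (m : ℕ) (g : ℝ) : Prop :=
  ∀ (x : X) (Λ : Finset ℕ), Λ.card ≤ m → IsWeakGreedySet f τ x Λ →
    ‖x - ∑ n ∈ Λ, f n x • e n‖ ≤ g * ‖x‖

variable (hbi : ∀ i j, f i (e j) = if i = j then (1 : ℝ) else 0)
include hbi

theorem apply_add_sum_smul (x : X) (A : Finset ℕ) (c : ℕ → ℝ) (n : ℕ) :
    f n (x + ∑ k ∈ A, c k • e k) = f n x + if n ∈ A then c n else 0 := by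
  simp only [map_add, map_sum, map_smul, hbi, smul_eq_mul, mul_ite, mul_one, mul_zero,
    sum_ite_eq]

theorem apply_add_smul (x : X) (c : ℝ) (k n : ℕ) :
    f n (x + c • e k) = f n x + if n = k then c else 0 := by
  simp only [map_add, map_smul, hbi, smul_eq_mul, mul_ite, mul_one, mul_zero]

theorem apply_add_smul_of_ne (x : X) (c : ℝ) {k n : ℕ} (hn : n ≠ k) :
    f n (x + c • e k) = f n x := by
  rw [apply_add_smul hbi, if_neg hn, add_zero]

theorem abs_apply_add_smul_le {x : X} {k : ℕ} {c r : ℝ} (hxk : f k x = 0)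
    (hx : ∀ n, |f n x| ≤ r) (hc : |c| ≤ r) (n : ℕ) : |f n (x + c • e k)| ≤ r := by
  obtain rfl | hn := eq_or_ne n k
  · rwa [apply_add_smul hbi, if_pos rfl, hxk, zero_add]
  · rw [apply_add_smul_of_ne hbi x c hn]; exact hx n

theorem isWeakGreedySet_add_sum_smul {τ α : ℝ} (hτ : 0 < τ) {x : X} {A : Finset ℕ}
    {c : ℕ → ℝ} (hAx : ∀ n ∈ A, f n x = 0) (hx : ∀ n, |f n x| ≤ α / τ)
    (hc : ∀ n ∈ A, α ≤ |c n|) :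
    IsWeakGreedySet f τ (x + ∑ k ∈ A, c k • e k) A := by
  intro i hi j hj
  rw [apply_add_sum_smul hbi, apply_add_sum_smul hbi, if_pos hi, if_neg hj, hAx i hi, zero_add,
    add_zero, ← le_div_iff₀' hτ]
  exact (hx j).trans (div_le_div_of_nonneg_right (hc i hi) hτ.le)

theorem add_sum_smul_sub_sum_coord {x : X} {A : Finset ℕ} (hAx : ∀ n ∈ A, f n x = 0)
    (c : ℕ → ℝ) :
    x + ∑ k ∈ A, c k • e k - ∑ n ∈ A, f n (x + ∑ k ∈ A, c k • e k) • e n = x := by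
  have hcoord : ∑ n ∈ A, f n (x + ∑ k ∈ A, c k • e k) • e n = ∑ n ∈ A, c n • e n :=
    sum_congr rfl fun n hn => by rw [apply_add_sum_smul hbi, if_pos hn, hAx n hn, zero_add]
  rw [hcoord, add_sub_cancel_right]

theorem WeakGreedyResidualBound.norm_le_norm_add_sum_smul {τ g : ℝ} {m : ℕ}
    (hg : WeakGreedyResidualBound e f τ m g) {x : X} {A : Finset ℕ} {c : ℕ → ℝ}
    {α : ℝ} (hτ : 0 < τ) (hA : A.card ≤ m) (hAx : ∀ n ∈ A, f n x = 0)
    (hx : ∀ n, |f n x| ≤ α / τ) (hc : ∀ n ∈ A, α ≤ |c n|) :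
    ‖x‖ ≤ g * ‖x + ∑ k ∈ A, c k • e k‖ := by
  have h := hg _ A hA (isWeakGreedySet_add_sum_smul hbi hτ hAx hx hc)
  rwa [add_sum_smul_sub_sum_coord hbi hAx c] at h

end Biorthogonal

theorem norm_add_smul_le_of_le {E : Type*} [SeminormedAddCommGroup E] [NormedSpace ℝ E]
    {x v : E} {α β C : ℝ} (hα : 0 ≤ α) (hαβ : α ≤ β) (hx : ‖x‖ ≤ C) (hxv : ‖x + β • v‖ ≤ C) :
    ‖x + α • v‖ ≤ C := by
  rcases hα.eq_or_lt with rfl | hα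
  · simpa using hx
  have hβ : β ≠ 0 := (hα.trans_le hαβ).ne'
  have hmem := (convex_closedBall (0 : E) C).add_smul_mem (y := β • v) (t := α / β)
    (by simpa using hx) (by simpa using hxv)
    ⟨div_nonneg hα.le (hα.trans_le hαβ).le, div_le_one_of_le₀ hαβ (hα.trans_le hαβ).le⟩
  simpa [smul_smul, div_mul_cancel₀ α hβ] using hmem

theorem stmt_2_general
    {X : Type*} [NormedAddCommGroup X] [NormedSpace ℝ X]
    (e : ℕ → X) (f : ℕ → X →L[ℝ] ℝ)
    (hbi : ∀ i j, f i (e j) = if i = j then (1 : ℝ) else 0)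
    (τ : ℝ) (hτ : 0 < τ) (hτ1 : τ ≤ 1)
    (m : ℕ) (α : ℝ) (hα : 0 ≤ α)
    (g : ℝ)
    (hg : ∀ (x : X) (Λ : Finset ℕ), Λ.card ≤ m →
      (∀ i ∈ Λ, ∀ j ∉ Λ, τ * |f j x| ≤ |f i x|) →
      ‖x - ∑ n ∈ Λ, f n x • e n‖ ≤ g * ‖x‖)
    (x : X) (hxinf : ∀ n, |f n x| ≤ α / τ)
    (A : Finset ℕ) (hA : A.card ≤ m) (hAx : ∀ n ∈ A, f n x = 0)
    (ε : ℕ → ℝ) (hε : ∀ n ∈ A, |ε n| = 1)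
    (a : ℕ → ℝ) (ha : ∀ n ∈ A, α ≤ a n) :
    ‖x + α • ∑ n ∈ A, ε n • e n‖ ≤ g * ‖x + ∑ n ∈ A, (ε n * a n) • e n‖ := by
  replace hg : WeakGreedyResidualBound e f τ m g := hg
  have habs : ∀ n ∈ A, |ε n * a n| = a n := fun n hn => by
    rw [abs_mul, hε n hn, one_mul, abs_of_nonneg (hα.trans (ha n hn))]
  induction A using Finset.induction_on_min_value (f := a) generalizing α x with
  | empty => simpa using hg x ∅ (by simp) (by simp [IsWeakGreedySet])
  | insert n₀ s hn₀ hmin ih =>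
    have hαβ : α ≤ a n₀ := ha n₀ (mem_insert_self _ _)
    have hx : ‖x‖ ≤ g * ‖x + ∑ n ∈ insert n₀ s, (ε n * a n) • e n‖ :=
      hg.norm_le_norm_add_sum_smul hbi hτ hA hAx hxinf fun n hn => (ha n hn).trans_eq (habs n hn).symm
    have hβ : ‖x + a n₀ • ∑ n ∈ insert n₀ s, ε n • e n‖
        ≤ g * ‖x + ∑ n ∈ insert n₀ s, (ε n * a n) • e n‖ := by
      have h := ih (a n₀) (hα.trans hαβ) (x + (ε n₀ * a n₀) • e n₀)
        (abs_apply_add_smul_le hbi (hAx n₀ (mem_insert_self _ _))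
          (fun n => (hxinf n).trans (div_le_div_of_nonneg_right hαβ hτ.le))
          ((habs n₀ (mem_insert_self _ _)).trans_le (le_div_self (hα.trans hαβ) hτ hτ1)))
        ((card_le_card (subset_insert _ _)).trans hA)
        (fun n hn => by
          rw [apply_add_smul_of_ne hbi _ _ (ne_of_mem_of_not_mem hn hn₀),
            hAx n (mem_insert_of_mem hn)])
        (fun n hn => hε n (mem_insert_of_mem hn)) hmin
        (fun n hn => habs n (mem_insert_of_mem hn))
      convert h using 2
      · rw [sum_insert hn₀, smul_add, smul_smul, mul_comm, add_assoc]
      · rw [sum_insert hn₀, add_assoc]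
    exact norm_add_smul_le_of_le hα hαβ hx hβ

/-- Proposition 2.4 (first part): the truncation-type estimate with the
weak quasi-greedy constant `g_{m,τ}^c`. -/
theorem stmt_2
    {X : Type*} [NormedAddCommGroup X] [NormedSpace ℝ X] [CompleteSpace X]
    (e : ℕ → X) (f : ℕ → X →L[ℝ] ℝ)
    (hbi : ∀ i j, f i (e j) = if i = j then (1 : ℝ) else 0)
    (htotal : ∀ x : X, (∀ n, f n x = 0) → x = 0)
    (hdense : Dense (Submodule.span ℝ (Set.range e) : Set X))
    (τ : ℝ) (hτ : 0 < τ) (hτ1 : τ ≤ 1)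
    (m : ℕ) (α : ℝ) (hα : 0 ≤ α)
    (g : ℝ)
    (hg : ∀ (x : X) (Λ : Finset ℕ), Λ.card ≤ m →
      (∀ i ∈ Λ, ∀ j ∉ Λ, τ * |f j x| ≤ |f i x|) →
      ‖x - ∑ n ∈ Λ, f n x • e n‖ ≤ g * ‖x‖)
    (x : X) (hxinf : ∀ n, |f n x| ≤ α / τ)
    (A : Finset ℕ) (hA : A.card ≤ m) (hAx : ∀ n ∈ A, f n x = 0)
    (ε : ℕ → ℝ) (hε : ∀ n ∈ A, |ε n| = 1)
    (a : ℕ → ℝ) (ha : ∀ n ∈ A, α ≤ a n) :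
    ‖x + α • ∑ n ∈ A, ε n • e n‖ ≤ g * ‖x + ∑ n ∈ A, (ε n * a n) • e n‖ :=
  stmt_2_general e f hbi τ hτ hτ1 m α hα g hg x hxinf A hA hAx ε hε a ha
end

section
/- Let X be a Banach space with Markushevich basis (e_n) and let C_ℓ ≥ 1 be such that ‖x − P_Λ(x)‖ ≤ C_ℓ ‖x‖ for every x ∈ X and every greedy set Λ of x (a finite set with min_{n∈Λ}|e_n^*(x)| ≥ max_{n∉Λ}|e_n^*(x)|). For α > 0 define the truncation operator T_α(x) = α ∑_{n∈Γ_α(x)} sgn(e_n^*(x)) e_n + ∑_{n∉Γ_α(x)} e_n^*(x) e_n, where Γ_α(x) = {n : |e_n^*(x)| > α}. Then ‖T_α(x)‖ ≤ C_ℓ ‖x‖ for all x ∈ X with finitely supported coefficient sequence above level α. -/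
/-!
Strong induction on the finite level set `Γ = {n | α < |cₙ|}`. If `Γ` is nonempty, let
`β > α` be the least value of `|cₙ|` on `Γ` and `Γ' = {n | β < |cₙ|} ⊊ Γ`. On `Γ \ Γ'` the
coefficients are `β • sign cₙ`, so
`T_α x = (α / β) • T_β x + (1 - α / β) • (x - P_Γ x)`,
a convex combination of a truncation at a smaller level set and the residual of the greedy
set `Γ`; both lie in the ball of radius `C ‖x‖`.
-/

open Finset

theorem Real.sign_mul_abs (r : ℝ) : Real.sign r * |r| = r := by
  rcases lt_trichotomy r 0 with h | rfl | h
  · rw [Real.sign_of_neg h, abs_of_neg h]; ring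
  · simp
  · rw [Real.sign_of_pos h, abs_of_pos h]; ring

section Module

variable {X : Type*} [AddCommGroup X] [Module ℝ X] (c : ℕ → ℝ) (e : ℕ → X) (x : X)

/-- `Γ` plays the role of `Γ_α(x)`, and `c n` of `e_n^*(x)`. -/
noncomputable def truncation (α : ℝ) (Γ : Finset ℕ) : X :=
  α • ∑ n ∈ Γ, Real.sign (c n) • e n + (x - ∑ n ∈ Γ, c n • e n)

def IsGreedySet (Λ : Finset ℕ) : Prop :=
  ∀ i ∈ Λ, ∀ j ∉ Λ, |c j| ≤ |c i|

variable {c}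

theorem isGreedySet_of_mem_iff {α : ℝ} {Γ : Finset ℕ} (hΓ : ∀ n, n ∈ Γ ↔ α < |c n|) :
    IsGreedySet c Γ := fun i hi j hj =>
  (not_lt.mp fun h => hj ((hΓ j).mpr h)).trans ((hΓ i).mp hi).le

theorem truncation_eq_smul_add_smul {α β : ℝ} (hβ : β ≠ 0) {Γ' Γ : Finset ℕ} (hsub : Γ' ⊆ Γ)
    (hlevel : ∀ n ∈ Γ \ Γ', |c n| = β) :
    truncation c e x α Γ =
      (α / β) • truncation c e x β Γ' + (1 - α / β) • (x - ∑ n ∈ Γ, c n • e n) := by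
  have hcoeff : ∑ n ∈ Γ \ Γ', c n • e n = β • ∑ n ∈ Γ \ Γ', Real.sign (c n) • e n := by
    rw [smul_sum]
    refine sum_congr rfl fun n hn => ?_
    rw [smul_smul, ← hlevel n hn, mul_comm, Real.sign_mul_abs]
  unfold truncation
  rw [← sum_sdiff hsub, ← sum_sdiff hsub (f := fun n => c n • e n), hcoeff]
  match_scalars <;> field_simp <;> ring

end Module

section Normed

variable {X : Type*} [NormedAddCommGroup X] [NormedSpace ℝ X] {c : ℕ → ℝ} {e : ℕ → X} {x : X}

theorem norm_truncation_le {M : ℝ}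
    (hgreedy : ∀ Λ, IsGreedySet c Λ → ‖x - ∑ n ∈ Λ, c n • e n‖ ≤ M) (Γ : Finset ℕ) :
    ∀ α, 0 ≤ α → (∀ n, n ∈ Γ ↔ α < |c n|) → ‖truncation c e x α Γ‖ ≤ M := by
  induction Γ using Finset.strongInduction with
  | H Γ ih =>
    intro α hα hΓ
    rcases Γ.eq_empty_or_nonempty with rfl | hne
    · simpa [truncation] using hgreedy ∅ (by simp [IsGreedySet])
    set β := Γ.inf' hne (fun n => |c n|)
    have hαβ : α < β := (lt_inf'_iff hne).mpr fun n hn => (hΓ n).mp hn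
    have hβ : 0 < β := hα.trans_lt hαβ
    set Γ' := Γ.filter (fun n => β < |c n|)
    have hΓ' : ∀ n, n ∈ Γ' ↔ β < |c n| := fun n =>
      ⟨fun h => (mem_filter.mp h).2, fun h => mem_filter.mpr ⟨(hΓ n).mpr (hαβ.trans h), h⟩⟩
    have hssub : Γ' ⊂ Γ := by
      obtain ⟨i, hi, hiβ⟩ := Γ.exists_mem_eq_inf' hne (fun n => |c n|)
      exact filter_ssubset.mpr ⟨i, hi, hiβ.not_lt⟩
    have hlevel : ∀ n ∈ Γ \ Γ', |c n| = β := fun n hn => by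
      obtain ⟨hnΓ, hnΓ'⟩ := mem_sdiff.mp hn
      exact le_antisymm (not_lt.mp fun h => hnΓ' ((hΓ' n).mpr h)) (inf'_le _ hnΓ)
    rw [truncation_eq_smul_add_smul e x hβ.ne' hssub.subset hlevel, ← mem_closedBall_zero_iff]
    exact convex_closedBall (0 : X) M
      (mem_closedBall_zero_iff.mpr (ih Γ' hssub β hβ.le hΓ'))
      (mem_closedBall_zero_iff.mpr (hgreedy Γ (isGreedySet_of_mem_iff hΓ)))
      (div_nonneg hα hβ.le) (sub_nonneg.mpr ((div_le_one hβ).mpr hαβ.le)) (add_sub_cancel _ _)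

end Normed

theorem stmt_3_general
    {X : Type*} [NormedAddCommGroup X] [NormedSpace ℝ X]
    (e : ℕ → X) (f : ℕ → X →L[ℝ] ℝ)
    (Cl : ℝ)
    (hCl : ∀ (x : X) (Λ : Finset ℕ),
      (∀ i ∈ Λ, ∀ j ∉ Λ, |f j x| ≤ |f i x|) →
      ‖x - ∑ n ∈ Λ, f n x • e n‖ ≤ Cl * ‖x‖)
    (α : ℝ) (hα : 0 < α) (x : X)
    (Γ : Finset ℕ) (hΓ : ∀ n, n ∈ Γ ↔ α < |f n x|) :
    ‖α • ∑ n ∈ Γ, Real.sign (f n x) • e n + (x - ∑ n ∈ Γ, f n x • e n)‖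
      ≤ Cl * ‖x‖ :=
  norm_truncation_le (hCl x) Γ α hα.le hΓ

/-- The truncation operator is bounded by the suppression quasi-greedy
constant: `‖T_α x‖ ≤ C_ℓ ‖x‖`. -/
theorem stmt_3
    {X : Type*} [NormedAddCommGroup X] [NormedSpace ℝ X] [CompleteSpace X]
    (e : ℕ → X) (f : ℕ → X →L[ℝ] ℝ)
    (hbi : ∀ i j, f i (e j) = if i = j then (1 : ℝ) else 0)
    (htotal : ∀ x : X, (∀ n, f n x = 0) → x = 0)
    (hdense : Dense (Submodule.span ℝ (Set.range e) : Set X))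
    (Cl : ℝ) (hCl1 : 1 ≤ Cl)
    (hCl : ∀ (x : X) (Λ : Finset ℕ),
      (∀ i ∈ Λ, ∀ j ∉ Λ, |f j x| ≤ |f i x|) →
      ‖x - ∑ n ∈ Λ, f n x • e n‖ ≤ Cl * ‖x‖)
    (α : ℝ) (hα : 0 < α) (x : X)
    (Γ : Finset ℕ) (hΓ : ∀ n, n ∈ Γ ↔ α < |f n x|) :
    ‖α • ∑ n ∈ Γ, Real.sign (f n x) • e n + (x - ∑ n ∈ Γ, f n x • e n)‖
      ≤ Cl * ‖x‖ :=
  stmt_3_general e f Cl hCl α hα x Γ hΓ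
end

section
/- Fix τ ∈ (0,1] and m ∈ ℕ. Define ν_{m,τ} = sup{‖τx + 1_{δB}‖/‖x + 1_{εA}‖} over all x ∈ X with ‖x‖_∞ ≤ 1/τ, finite sets A, B with |A| = |B| ≤ m and A, B, supp(x) pairwise disjoint, and all signs (ε), (δ). Define Ω_{m,τ} = sup{‖x‖/‖x − P_B(x) + t·1_{εA}‖} over all t > 0, x ∈ X with ‖x‖_∞ ≤ t/τ, finite sets A, B with |A| = |B| ≤ m, (supp(x) ∪ B) ∩ A = ∅, and signs (ε). Then Ω_{m,τ} = ν_{m,τ}/τ. -/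
/-!
If `Ω_{m,τ} ≤ C`, apply that inequality with `t = τ` to `y = τ x + 1_{δB}`: since `x` vanishes on
`B`, `P_B y = 1_{δB}` and `y - P_B y + τ 1_{εA} = τ (x + 1_{εA})`, so `ν_{m,τ} ≤ τ C`.
Conversely, the norm is convex in each coordinate, so the `B`-coordinates of `x`, which are bounded
by `t/τ`, may be replaced one at a time by `± t/τ` without decreasing `‖x‖`; the vector
`t⁻¹ (x - P_B x)` is then admissible for `ν_{m,τ}`, and `ν_{m,τ} ≤ τ C` gives `Ω_{m,τ} ≤ C`.
-/

open Finset

section Signs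

variable {X : Type*} [NormedAddCommGroup X] [NormedSpace ℝ X]

lemma norm_add_smul_le_max (w u : X) {c r : ℝ} (h : |c| ≤ r) :
    ‖w + c • u‖ ≤ max ‖w + -r • u‖ ‖w + r • u‖ := by
  have hconv := (convexOn_univ_norm (E := X)).comp_affineMap (AffineMap.lineMap w (w + u))
  have hc : c ∈ segment ℝ (-r) r := by
    rw [segment_eq_Icc (by linarith [abs_nonneg c])]
    exact abs_le.mp h
  simpa [AffineMap.lineMap_apply_module', add_comm w] using
    hconv.le_on_segment (Set.mem_univ _) (Set.mem_univ _) hc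

lemma exists_abs_eq_one_norm_add_smul_le (w u : X) {c r : ℝ} (h : |c| ≤ r) :
    ∃ s : ℝ, |s| = 1 ∧ ‖w + c • u‖ ≤ ‖w + (r * s) • u‖ := by
  rcases le_max_iff.mp (norm_add_smul_le_max w u h) with h | h
  · exact ⟨-1, by simp, by simpa using h⟩
  · exact ⟨1, by simp, by simpa using h⟩

lemma exists_signs_norm_add_sum_le {ι : Type*} [DecidableEq ι] (e : ι → X) {r : ℝ}
    (c : ι → ℝ) (B : Finset ι) (hc : ∀ n ∈ B, |c n| ≤ r) (v : X) :
    ∃ δ : ι → ℝ, (∀ n ∈ B, |δ n| = 1) ∧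
      ‖v + ∑ n ∈ B, c n • e n‖ ≤ ‖v + r • ∑ n ∈ B, δ n • e n‖ := by
  induction B using Finset.induction_on generalizing v with
  | empty => exact ⟨fun _ => 1, by simp, by simp⟩
  | @insert a B haB ih =>
    obtain ⟨δ, hδ, hle⟩ := ih (fun n hn => hc n (mem_insert_of_mem hn)) (v + c a • e a)
    set w := v + r • ∑ n ∈ B, δ n • e n
    obtain ⟨s, hs, hws⟩ :=
      exists_abs_eq_one_norm_add_smul_le w (e a) (hc a (mem_insert_self a B))
    refine ⟨Function.update δ a s, fun n hn => ?_, ?_⟩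
    · rcases mem_insert.mp hn with rfl | hn
      · simpa using hs
      · simpa [Function.update_of_ne (ne_of_mem_of_not_mem hn haB)] using hδ n hn
    calc ‖v + ∑ n ∈ insert a B, c n • e n‖
        = ‖(v + c a • e a) + ∑ n ∈ B, c n • e n‖ := by rw [sum_insert haB, add_assoc]
      _ ≤ ‖(v + c a • e a) + r • ∑ n ∈ B, δ n • e n‖ := hle
      _ = ‖w + c a • e a‖ := by rw [add_right_comm]
      _ ≤ ‖w + (r * s) • e a‖ := hws
      _ = ‖v + r • ∑ n ∈ insert a B, Function.update δ a s n • e n‖ := by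
        rw [sum_insert haB, Function.update_self,
          sum_congr rfl fun n hn => by rw [Function.update_of_ne (ne_of_mem_of_not_mem hn haB)]]
        congr 1
        module

end Signs

section Biorthogonal

variable {X : Type*} [NormedAddCommGroup X] [NormedSpace ℝ X] {ι : Type*} [DecidableEq ι]
  (e : ι → X) (f : ι → X →L[ℝ] ℝ)

lemma apply_sum_smul_of_biorthogonal (hbi : ∀ i j, f i (e j) = if i = j then (1 : ℝ) else 0)
    (g : ι → ℝ) (B : Finset ι) (n : ι) :
    f n (∑ k ∈ B, g k • e k) = if n ∈ B then g n else 0 := by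
  simp [map_sum, hbi]

lemma apply_sub_sum_apply_smul_of_biorthogonal
    (hbi : ∀ i j, f i (e j) = if i = j then (1 : ℝ) else 0) (x : X) (B : Finset ι) (n : ι) :
    f n (x - ∑ k ∈ B, f k x • e k) = if n ∈ B then 0 else f n x := by
  rw [map_sub, apply_sum_smul_of_biorthogonal e f hbi]
  split_ifs <;> simp

/-- `OmegaBound e f τ m C` says `Ω_{m,τ} ≤ C`, where `1_{εA} = ∑ n ∈ A, ε n • e n` and
`P_B x = ∑ n ∈ B, f n x • e n`. -/
def OmegaBound (τ : ℝ) (m : ℕ) (C : ℝ) : Prop :=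
  ∀ (t : ℝ), 0 < t → ∀ (x : X), (∀ n, |f n x| ≤ t / τ) →
    ∀ (A B : Finset ι), A.card = B.card → B.card ≤ m →
    (∀ n ∈ A, f n x = 0) → Disjoint A B →
    ∀ ε : ι → ℝ, (∀ n ∈ A, |ε n| = 1) →
    ‖x‖ ≤ C * ‖x - ∑ n ∈ B, f n x • e n + t • ∑ n ∈ A, ε n • e n‖

/-- `NuBound e f τ m K` says `ν_{m,τ} ≤ K`. -/
def NuBound (τ : ℝ) (m : ℕ) (K : ℝ) : Prop :=
  ∀ (x : X), (∀ n, |f n x| ≤ 1 / τ) →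
    ∀ (A B : Finset ι), A.card = B.card → B.card ≤ m →
    (∀ n ∈ A, f n x = 0) → (∀ n ∈ B, f n x = 0) → Disjoint A B →
    ∀ ε δ : ι → ℝ, (∀ n ∈ A, |ε n| = 1) → (∀ n ∈ B, |δ n| = 1) →
    ‖τ • x + ∑ n ∈ B, δ n • e n‖ ≤ K * ‖x + ∑ n ∈ A, ε n • e n‖

variable {e f} {τ : ℝ} {m : ℕ} {C : ℝ}

lemma NuBound.of_omegaBound (hbi : ∀ i j, f i (e j) = if i = j then (1 : ℝ) else 0)
    (hτ : 0 < τ) (hΩ : OmegaBound e f τ m C) : NuBound e f τ m (τ * C) := by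
  intro x hx A B hcard hm hA hB hdisj ε δ hε hδ
  set y := τ • x + ∑ n ∈ B, δ n • e n
  have hfy (n : ι) : f n y = τ * f n x + if n ∈ B then δ n else 0 := by
    simp [y, apply_sum_smul_of_biorthogonal e f hbi]
  have hy : ∀ n, |f n y| ≤ τ / τ := by
    intro n
    rw [div_self hτ.ne', hfy]
    by_cases hn : n ∈ B
    · simp [hn, hB n hn, hδ n hn]
    · rw [if_neg hn, add_zero, abs_mul, abs_of_pos hτ, ← le_div_iff₀' hτ]
      exact hx n
  have hyA : ∀ n ∈ A, f n y = 0 := fun n hn => by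
    simp [hfy, hA n hn, Finset.disjoint_left.mp hdisj hn]
  have hPy : ∑ n ∈ B, f n y • e n = ∑ n ∈ B, δ n • e n :=
    sum_congr rfl fun n hn => by simp [hfy, hn, hB n hn]
  have key : y - ∑ n ∈ B, f n y • e n + τ • ∑ n ∈ A, ε n • e n
      = τ • (x + ∑ n ∈ A, ε n • e n) := by
    rw [hPy, smul_add]; simp only [y]; abel
  calc ‖y‖ ≤ C * ‖τ • (x + ∑ n ∈ A, ε n • e n)‖ := key ▸ hΩ τ hτ y hy A B hcard hm hyA hdisj ε hε
    _ = τ * C * ‖x + ∑ n ∈ A, ε n • e n‖ := by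
      rw [norm_smul, Real.norm_of_nonneg hτ.le]; ring

lemma OmegaBound.of_nuBound (hbi : ∀ i j, f i (e j) = if i = j then (1 : ℝ) else 0)
    (hτ : 0 < τ) (hν : NuBound e f τ m (τ * C)) : OmegaBound e f τ m C := by
  intro t ht x hx A B hcard hm hA hdisj ε hε
  set v := x - ∑ n ∈ B, f n x • e n
  obtain ⟨δ, hδ, hxδ⟩ := exists_signs_norm_add_sum_le e (fun n => f n x) B (fun n _ => hx n) v
  rw [sub_add_cancel] at hxδ
  have hfv : ∀ n, f n v = if n ∈ B then 0 else f n x :=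
    apply_sub_sum_apply_smul_of_biorthogonal e f hbi x B
  have hy : ∀ n, |f n (t⁻¹ • v)| ≤ 1 / τ := by
    intro n
    rw [map_smul, hfv, smul_eq_mul, abs_mul, abs_inv, abs_of_pos ht]
    split_ifs
    · simp [hτ.le]
    · calc t⁻¹ * |f n x| ≤ t⁻¹ * (t / τ) := by gcongr; exact hx n
        _ = 1 / τ := by field_simp
  have hyA : ∀ n ∈ A, f n (t⁻¹ • v) = 0 := fun n hn => by
    simp [hfv, hA n hn, Finset.disjoint_left.mp hdisj hn]
  have hyB : ∀ n ∈ B, f n (t⁻¹ • v) = 0 := fun n hn => by simp [hfv, hn]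
  have hνv := hν (t⁻¹ • v) hy A B hcard hm hyA hyB hdisj ε δ hε hδ
  have key₁ : τ • t⁻¹ • v + ∑ n ∈ B, δ n • e n
      = (τ / t) • (v + (t / τ) • ∑ n ∈ B, δ n • e n) := by
    have hτt : τ / t * (t / τ) = 1 := by field_simp
    rw [smul_add, smul_smul, smul_smul, hτt, one_smul, div_eq_mul_inv]
  have key₂ : t⁻¹ • v + ∑ n ∈ A, ε n • e n = t⁻¹ • (v + t • ∑ n ∈ A, ε n • e n) := by
    rw [smul_add, smul_smul, inv_mul_cancel₀ ht.ne', one_smul]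
  rw [key₁, key₂, norm_smul, norm_smul, Real.norm_of_nonneg (by positivity),
    Real.norm_of_nonneg (by positivity)] at hνv
  refine le_of_mul_le_mul_left ?_ (div_pos hτ ht)
  calc τ / t * ‖x‖ ≤ τ / t * ‖v + (t / τ) • ∑ n ∈ B, δ n • e n‖ := by gcongr
    _ ≤ τ * C * (t⁻¹ * ‖v + t • ∑ n ∈ A, ε n • e n‖) := hνv
    _ = τ / t * (C * ‖v + t • ∑ n ∈ A, ε n • e n‖) := by ring

end Biorthogonal

theorem stmt_4_general
    {X : Type*} [NormedAddCommGroup X] [NormedSpace ℝ X]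
    (e : ℕ → X) (f : ℕ → X →L[ℝ] ℝ)
    (hbi : ∀ i j, f i (e j) = if i = j then (1 : ℝ) else 0)
    (τ : ℝ) (hτ : 0 < τ) (m : ℕ)
    (C : ℝ) :
    (∀ (t : ℝ), 0 < t → ∀ (x : X), (∀ n, |f n x| ≤ t / τ) →
      ∀ (A B : Finset ℕ), A.card = B.card → B.card ≤ m →
      (∀ n ∈ A, f n x = 0) → Disjoint A B →
      ∀ ε : ℕ → ℝ, (∀ n ∈ A, |ε n| = 1) →
      ‖x‖ ≤ C * ‖x - ∑ n ∈ B, f n x • e n + t • ∑ n ∈ A, ε n • e n‖)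
    ↔
    (∀ (x : X), (∀ n, |f n x| ≤ 1 / τ) →
      ∀ (A B : Finset ℕ), A.card = B.card → B.card ≤ m →
      (∀ n ∈ A, f n x = 0) → (∀ n ∈ B, f n x = 0) → Disjoint A B →
      ∀ ε δ : ℕ → ℝ, (∀ n ∈ A, |ε n| = 1) → (∀ n ∈ B, |δ n| = 1) →
      ‖τ • x + ∑ n ∈ B, δ n • e n‖ ≤ (τ * C) * ‖x + ∑ n ∈ A, ε n • e n‖) :=
  ⟨NuBound.of_omegaBound hbi hτ, OmegaBound.of_nuBound hbi hτ⟩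

/-- Lemma 2.2: `Ω_{m,τ} = ν_{m,τ}/τ`, expressed by the equivalence of the
corresponding upper-bound properties (`Ω_{m,τ} ≤ C ↔ ν_{m,τ} ≤ τ·C`). -/
theorem stmt_4
    {X : Type*} [NormedAddCommGroup X] [NormedSpace ℝ X] [CompleteSpace X]
    (e : ℕ → X) (f : ℕ → X →L[ℝ] ℝ)
    (hbi : ∀ i j, f i (e j) = if i = j then (1 : ℝ) else 0)
    (htotal : ∀ x : X, (∀ n, f n x = 0) → x = 0)
    (hdense : Dense (Submodule.span ℝ (Set.range e) : Set X))
    (τ : ℝ) (hτ : 0 < τ) (hτ1 : τ ≤ 1) (m : ℕ)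
    (C : ℝ) (hC : 0 < C) :
    (∀ (t : ℝ), 0 < t → ∀ (x : X), (∀ n, |f n x| ≤ t / τ) →
      ∀ (A B : Finset ℕ), A.card = B.card → B.card ≤ m →
      (∀ n ∈ A, f n x = 0) → Disjoint A B →
      ∀ ε : ℕ → ℝ, (∀ n ∈ A, |ε n| = 1) →
      ‖x‖ ≤ C * ‖x - ∑ n ∈ B, f n x • e n + t • ∑ n ∈ A, ε n • e n‖)
    ↔
    (∀ (x : X), (∀ n, |f n x| ≤ 1 / τ) →
      ∀ (A B : Finset ℕ), A.card = B.card → B.card ≤ m →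
      (∀ n ∈ A, f n x = 0) → (∀ n ∈ B, f n x = 0) → Disjoint A B →
      ∀ ε δ : ℕ → ℝ, (∀ n ∈ A, |ε n| = 1) → (∀ n ∈ B, |δ n| = 1) →
      ‖τ • x + ∑ n ∈ B, δ n • e n‖ ≤ (τ * C) * ‖x + ∑ n ∈ A, ε n • e n‖) :=
  stmt_4_general e f hbi τ hτ m C
end

section
/- Let X be a Banach space with Markushevich basis and τ ∈ (0,1]. For m ∈ ℕ let ν_{m,τ} be the property-(A,τ) constant, k_{2m−1}^c the complemented unconditionality constant of order 2m−1, and L_{m,τ} the smallest constant such that ‖x − G‖ ≤ L_{m,τ} σ_m(x) for all x ∈ X and all τ-greedy sums G of order m of x, where σ_m(x) = inf{‖x − ∑_{n∈A} a_n e_n‖ : |A| ≤ m, scalars (a_n)}. Then L_{m,τ} ≤ k_{2m−1}^c ν_{m,τ}/τ. -/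
/-!
Write `xₙ = f n x`, `y = x - ∑_{n ∈ A} aₙ eₙ`, `Γ = A \ Λ` and `u = x - P_{Λ ∪ A} x`, so that
`x - P_Λ x = u + ∑_{n ∈ Γ} xₙ eₙ`. The norm is a convex function of finitely many coefficients,
so each estimate only has to be checked at the vertices of a box of coefficients.

Let `α` be the least `|xₙ|` on `Λ \ A`, attained at `n₀`; off `Λ` the coefficients of `x` are at
most `α / τ`. At a vertex of the box `[-α/τ, α/τ]^Γ`, property (A, τ) trades `Γ` for a set
`B₀ ∋ n₀` in `Λ \ A` of the same size, at the cost `ν / τ`, leaving `u + α ∑_{n ∈ B₀} sgn(xₙ) eₙ`.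
There the coefficient `α sgn(xₙ)` lies between `0` and `xₙ`, and equals `x_{n₀}` at `n₀`, so the
vertices of this second box are the vectors `x - P_E x` with `A ⊆ E ⊆ (Λ ∪ A) \ {n₀}`. Then
`|E| ≤ 2m - 1` and `x - P_E x = y - P_E y`, whose norm is at most `k^c_{2m-1} ‖y‖`.
-/

open Finset

section

variable {ι X : Type*} [NormedAddCommGroup X] [NormedSpace ℝ X]

def IsBiorthogonal [DecidableEq ι] (e : ι → X) (f : ι → X →L[ℝ] ℝ) : Prop :=
  ∀ i j, f i (e j) = if i = j then (1 : ℝ) else 0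

def IsWeakGreedy (f : ι → X →L[ℝ] ℝ) (τ : ℝ) (x : X) (Λ : Finset ι) : Prop :=
  ∀ i ∈ Λ, ∀ j ∉ Λ, τ * |f j x| ≤ |f i x|

-- `ν_{m,τ} ≤ ν`
def HasPropertyA (e : ι → X) (f : ι → X →L[ℝ] ℝ) (τ : ℝ) (m : ℕ) (ν : ℝ) : Prop :=
  ∀ x : X, (∀ n, |f n x| ≤ 1 / τ) →
    ∀ A B : Finset ι, A.card = B.card → B.card ≤ m →
    (∀ n ∈ A, f n x = 0) → (∀ n ∈ B, f n x = 0) → Disjoint A B →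
    ∀ ε δ : ι → ℝ, (∀ n ∈ A, |ε n| = 1) → (∀ n ∈ B, |δ n| = 1) →
    ‖τ • x + ∑ n ∈ B, δ n • e n‖ ≤ ν * ‖x + ∑ n ∈ A, ε n • e n‖

-- `k^c_k ≤ K`
def IsComplUncondConst (e : ι → X) (f : ι → X →L[ℝ] ℝ) (k : ℕ) (K : ℝ) : Prop :=
  ∀ A : Finset ι, A.card ≤ k → ∀ x : X, ‖x - ∑ n ∈ A, f n x • e n‖ ≤ K * ‖x‖

theorem ConvexOn.le_of_forall_vertex [DecidableEq ι] {φ : (ι → ℝ) → ℝ}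
    (hφ : ConvexOn ℝ Set.univ φ) {C : ℝ} {lo hi c : ι → ℝ} (T : Finset ι)
    (hc : ∀ n ∈ T, c n ∈ Set.uIcc (lo n) (hi n))
    (hv : ∀ s : ι → ℝ, (∀ n ∉ T, s n = c n) → (∀ n ∈ T, s n = lo n ∨ s n = hi n) → φ s ≤ C) :
    φ c ≤ C := by
  induction T using Finset.induction_on with
  | empty => exact hv c (fun _ _ => rfl) (by simp)
  | insert b T hb ih =>
    refine ih (fun n hn => hc n (mem_insert_of_mem hn)) fun s hsc hsT => ?_
    obtain ⟨p, q, hp, hq, hpq, hsb⟩ : s b ∈ segment ℝ (lo b) (hi b) := by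
      rw [segment_eq_uIcc, hsc b hb]
      exact hc b (mem_insert_self b T)
    have hseg : s ∈ segment ℝ (Function.update s b (lo b)) (Function.update s b (hi b)) := by
      refine ⟨p, q, hp, hq, hpq, funext fun n => ?_⟩
      rcases eq_or_ne n b with rfl | hn
      · simpa using hsb
      · simp [Function.update_of_ne hn, ← add_mul, hpq]
    have hvertex : ∀ t, t = lo b ∨ t = hi b → φ (Function.update s b t) ≤ C := by
      refine fun t ht => hv _ (fun n hn => ?_) fun n hn => ?_
      · rw [Function.update_of_ne (by rintro rfl; exact hn (mem_insert_self n T))]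
        exact hsc n (fun h => hn (mem_insert_of_mem h))
      · rcases eq_or_ne n b with rfl | hnb
        · simpa using ht
        · rw [Function.update_of_ne hnb]
          exact hsT n ((mem_insert.mp hn).resolve_left hnb)
    exact (hφ.le_on_segment (Set.mem_univ _) (Set.mem_univ _) hseg).trans
      (max_le (hvertex _ (Or.inl rfl)) (hvertex _ (Or.inr rfl)))

theorem convexOn_norm_add_sum_smul (u : X) (g : ι → X) (T : Finset ι) :
    ConvexOn ℝ Set.univ fun c : ι → ℝ => ‖u + ∑ n ∈ T, c n • g n‖ := by
  let L : (ι → ℝ) →ₗ[ℝ] X := ∑ n ∈ T, (LinearMap.proj n).smulRight (g n)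
  have hL : ∀ c, L c = ∑ n ∈ T, c n • g n := fun c => by simp [L]
  have := ((convexOn_norm convex_univ).translate_right u).comp_linearMap L
  simpa [Function.comp_def, hL] using this

variable {e : ι → X} {f : ι → X →L[ℝ] ℝ}

theorem coord_sum_smul [DecidableEq ι] (hbi : IsBiorthogonal e f)
    (c : ι → ℝ) (S : Finset ι) (n : ι) :
    f n (∑ k ∈ S, c k • e k) = if n ∈ S then c n else 0 := by
  simp [hbi _ _]

theorem IsComplUncondConst.norm_sub_sum_coord_le [DecidableEq ι] {k : ℕ} {K : ℝ}
    (hK : IsComplUncondConst e f k K) (hbi : IsBiorthogonal e f)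
    {A E : Finset ι} (hAE : A ⊆ E) (hE : E.card ≤ k) (x : X) (a : ι → ℝ) :
    ‖x - ∑ n ∈ E, f n x • e n‖ ≤ K * ‖x - ∑ n ∈ A, a n • e n‖ := by
  have hcoord : ∑ n ∈ E, f n (x - ∑ k ∈ A, a k • e k) • e n
      = ∑ n ∈ E, f n x • e n - ∑ n ∈ A, a n • e n := by
    simp only [map_sub, coord_sum_smul hbi, sub_smul, sum_sub_distrib, ite_smul, zero_smul,
      sum_ite_mem, inter_eq_right.mpr hAE]
  calc ‖x - ∑ n ∈ E, f n x • e n‖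
      = ‖(x - ∑ n ∈ A, a n • e n) - ∑ n ∈ E, f n (x - ∑ k ∈ A, a k • e k) • e n‖ := by
        rw [hcoord]; abel_nf
    _ ≤ K * ‖x - ∑ n ∈ A, a n • e n‖ := hK E hE _

theorem norm_sub_sum_add_sum_le_of_forall_subset [DecidableEq ι] {x : X} {D T : Finset ι}
    (hTD : T ⊆ D) {c : ι → ℝ} (hc : ∀ n ∈ T, c n ∈ Set.uIcc 0 (f n x)) {K : ℝ}
    (hK : ∀ S ⊆ T, ‖x - ∑ n ∈ D \ S, f n x • e n‖ ≤ K) :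
    ‖x - ∑ n ∈ D, f n x • e n + ∑ n ∈ T, c n • e n‖ ≤ K := by
  refine (convexOn_norm_add_sum_smul _ e T).le_of_forall_vertex T hc fun s _ hs => ?_
  set S := T.filter fun n => s n = f n x
  have hsS : ∑ n ∈ T, s n • e n = ∑ n ∈ S, f n x • e n := by
    rw [sum_filter]
    refine sum_congr rfl fun n hn => ?_
    split_ifs with h
    · rw [h]
    · rw [(hs n hn).resolve_right h, zero_smul]
  have hD : ∑ n ∈ D \ S, f n x • e n + ∑ n ∈ S, f n x • e n = ∑ n ∈ D, f n x • e n :=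
    sum_sdiff ((filter_subset _ _).trans hTD)
  calc ‖x - ∑ n ∈ D, f n x • e n + ∑ n ∈ T, s n • e n‖
      = ‖x - ∑ n ∈ D \ S, f n x • e n‖ := by rw [hsS, ← hD]; abel_nf
    _ ≤ K := hK S (filter_subset _ _)

namespace HasPropertyA

variable {τ ν : ℝ} {m : ℕ}

theorem pos [DecidableEq ι] (hA : HasPropertyA e f τ m ν)
    (hbi : IsBiorthogonal e f) (hτ : 0 < τ) (hm : 1 ≤ m)
    {i j : ι} (hij : i ≠ j) : 0 < ν := by
  have h := hA 0 (fun n => by simp only [map_zero, abs_zero]; positivity) {i} {j} rfl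
    (by simpa using hm) (by simp) (by simp) (disjoint_singleton.mpr hij) 1 1 (by simp) (by simp)
  simp only [smul_zero, zero_add, sum_singleton, Pi.one_apply, one_smul] at h
  have hej : 0 < ‖e j‖ := norm_pos_iff.mpr fun h0 => by simpa [h0] using hbi j j
  exact pos_of_mul_pos_left (hej.trans_le h) (norm_nonneg _)

theorem norm_smul_add_smul_sum_le (hA : HasPropertyA e f τ m ν) (hτ : 0 < τ)
    {z : X} {α : ℝ} (hα : 0 ≤ α) (hz : ∀ n, τ * |f n z| ≤ α)
    {A B : Finset ι} (hAB : A.card = B.card) (hBm : B.card ≤ m)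
    (hzA : ∀ n ∈ A, f n z = 0) (hzB : ∀ n ∈ B, f n z = 0) (hdisj : Disjoint A B)
    {ε δ : ι → ℝ} (hε : ∀ n ∈ A, |ε n| = 1) (hδ : ∀ n ∈ B, |δ n| = 1) :
    ‖τ • z + α • ∑ n ∈ B, δ n • e n‖ ≤ ν * ‖z + α • ∑ n ∈ A, ε n • e n‖ := by
  rcases hα.eq_or_lt with rfl | hα
  · have hz0 : ∀ n, f n z = 0 := fun n =>
      abs_eq_zero.mp (le_antisymm (nonpos_of_mul_nonpos_right (hz n) hτ) (abs_nonneg _))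
    simpa using hA z (fun n => by rw [hz0, abs_zero]; positivity) ∅ ∅ rfl (by simp) (by simp)
      (by simp) (disjoint_empty_left _) ε δ (by simp) (by simp)
  · have hcoord : ∀ n, |f n (α⁻¹ • z)| ≤ 1 / τ := fun n => by
      rw [map_smul, smul_eq_mul, abs_mul, abs_inv, abs_of_pos hα, inv_mul_le_iff₀ hα,
        mul_one_div, le_div_iff₀ hτ, mul_comm]
      exact hz n
    have key := hA (α⁻¹ • z) hcoord A B hAB hBm (fun n hn => by simp [hzA n hn])
      (fun n hn => by simp [hzB n hn]) hdisj ε δ hε hδ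
    have hnorm : ∀ w : X, ‖α • w‖ = α * ‖w‖ := fun w => by
      rw [norm_smul, Real.norm_of_nonneg hα.le]
    calc ‖τ • z + α • ∑ n ∈ B, δ n • e n‖
        = α * ‖τ • α⁻¹ • z + ∑ n ∈ B, δ n • e n‖ := by
          rw [← hnorm, smul_add, smul_comm α τ, smul_inv_smul₀ hα.ne']
      _ ≤ α * (ν * ‖α⁻¹ • z + ∑ n ∈ A, ε n • e n‖) := by gcongr
      _ = ν * ‖z + α • ∑ n ∈ A, ε n • e n‖ := by
          rw [mul_left_comm, ← hnorm, smul_add, smul_inv_smul₀ hα.ne']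

theorem norm_sub_sum_coord_le [DecidableEq ι] (hA : HasPropertyA e f τ m ν)
    (hbi : IsBiorthogonal e f) (hτ : 0 < τ)
    {x : X} {Λ Γ B₀ : Finset ι} {α : ℝ} (hα : 0 ≤ α) (hsmall : ∀ n ∉ Λ, τ * |f n x| ≤ α)
    (hΓΛ : Disjoint Γ Λ) (hΓm : Γ.card ≤ m) (hB₀Λ : B₀ ⊆ Λ) (hB₀Γ : B₀.card = Γ.card)
    {ε : ι → ℝ} (hε : ∀ n ∈ B₀, |ε n| = 1) :
    ‖x - ∑ n ∈ Λ, f n x • e n‖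
      ≤ ν / τ * ‖x - ∑ n ∈ Λ ∪ Γ, f n x • e n + α • ∑ n ∈ B₀, ε n • e n‖ := by
  set u := x - ∑ n ∈ Λ ∪ Γ, f n x • e n with hu
  have hfu : ∀ n, f n u = if n ∈ Λ ∪ Γ then 0 else f n x := fun n => by
    simp only [hu, map_sub, coord_sum_smul hbi]
    split_ifs <;> ring
  have hdecomp : x - ∑ n ∈ Λ, f n x • e n = u + ∑ n ∈ Γ, f n x • e n := by
    rw [hu, sum_union hΓΛ.symm]
    abel
  rw [hdecomp]
  have hα' : 0 ≤ α / τ := div_nonneg hα hτ.le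
  refine (convexOn_norm_add_sum_smul u e Γ).le_of_forall_vertex (lo := fun _ => -(α / τ))
    (hi := fun _ => α / τ) Γ (fun n hn => ?_) fun s _ hs => ?_
  · rw [Set.uIcc_of_le (by linarith), Set.mem_Icc, ← abs_le, le_div_iff₀ hτ, mul_comm]
    exact hsmall n (disjoint_left.mp hΓΛ hn)
  · set δ : ι → ℝ := fun n => if s n = α / τ then 1 else -1
    have hδ : ∀ n, |δ n| = 1 := fun n => by simp only [δ]; split_ifs <;> simp
    have hsδ : ∑ n ∈ Γ, s n • e n = τ⁻¹ • α • ∑ n ∈ Γ, δ n • e n := by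
      simp only [smul_sum, smul_smul]
      refine sum_congr rfl fun n hn => ?_
      congr 1
      simp only [δ]
      split_ifs with h
      · rw [h]; field_simp
      · rw [(hs n hn).resolve_right h]; field_simp
    have hz : ∀ n, τ * |f n u| ≤ α := fun n => by
      rw [hfu]
      split_ifs with h
      · simpa using hα
      · exact hsmall n fun h' => h (mem_union_left _ h')
    have key := hA.norm_smul_add_smul_sum_le hτ hα hz hB₀Γ hΓm
      (fun n hn => by rw [hfu, if_pos (mem_union_left _ (hB₀Λ hn))])
      (fun n hn => by rw [hfu, if_pos (mem_union_right _ hn)])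
      (hΓΛ.symm.mono_left hB₀Λ) hε (fun n _ => hδ n)
    calc ‖u + ∑ n ∈ Γ, s n • e n‖
        = τ⁻¹ * ‖τ • u + α • ∑ n ∈ Γ, δ n • e n‖ := by
          rw [← abs_of_pos (inv_pos.mpr hτ), ← Real.norm_eq_abs, ← norm_smul, smul_add,
            inv_smul_smul₀ hτ.ne', hsδ]
      _ ≤ τ⁻¹ * (ν * ‖u + α • ∑ n ∈ B₀, ε n • e n‖) := by gcongr
      _ = ν / τ * ‖u + α • ∑ n ∈ B₀, ε n • e n‖ := by ring

end HasPropertyA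

namespace IsComplUncondConst

variable [DecidableEq ι] {m : ℕ} {K : ℝ}

theorem norm_sub_sum_coord_add_smul_sum_le (hK : IsComplUncondConst e f (2 * m - 1) K)
    (hbi : IsBiorthogonal e f) {x : X} {Λ A B₀ : Finset ι}
    (hΛ : Λ.card ≤ m) (hA : A.card ≤ m) (hB₀ : B₀ ⊆ Λ \ A) {n₀ : ι} (hn₀ : n₀ ∈ B₀)
    (hmin : ∀ n ∈ B₀, |f n₀ x| ≤ |f n x|) (a : ι → ℝ) :
    ‖x - ∑ n ∈ Λ ∪ A, f n x • e n
        + |f n₀ x| • ∑ n ∈ B₀, (if 0 ≤ f n x then 1 else -1 : ℝ) • e n‖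
      ≤ K * ‖x - ∑ n ∈ A, a n • e n‖ := by
  set c : ι → ℝ := fun n => |f n₀ x| * if 0 ≤ f n x then 1 else -1
  have hc : ∀ n ∈ B₀, c n ∈ Set.uIcc 0 (f n x) := fun n hn => by
    have := hmin n hn
    simp only [c]
    split_ifs with h
    · rw [abs_of_nonneg h] at this
      exact Set.uIcc_of_le h ▸ ⟨by simp, by simpa using this⟩
    · rw [abs_of_neg (not_le.mp h)] at this
      exact Set.uIcc_of_ge (not_le.mp h).le ▸ ⟨by linarith, by simp⟩
  have hcn₀ : c n₀ = f n₀ x := by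
    simp only [c]
    split_ifs with h
    · rw [abs_of_nonneg h, mul_one]
    · rw [abs_of_neg (not_le.mp h)]; ring
  have hn₀Λ : n₀ ∈ Λ ∪ A := mem_union_left _ (mem_sdiff.mp (hB₀ hn₀)).1
  have hsplit : x - ∑ n ∈ Λ ∪ A, f n x • e n
        + |f n₀ x| • ∑ n ∈ B₀, (if 0 ≤ f n x then 1 else -1 : ℝ) • e n
      = x - ∑ n ∈ (Λ ∪ A).erase n₀, f n x • e n + ∑ n ∈ B₀.erase n₀, c n • e n := by
    have hcsum : |f n₀ x| • ∑ n ∈ B₀, (if 0 ≤ f n x then 1 else -1 : ℝ) • e n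
        = ∑ n ∈ B₀, c n • e n := by
      simp only [c, smul_sum, smul_smul]
    rw [hcsum, ← add_sum_erase _ _ hn₀Λ, ← add_sum_erase _ _ hn₀, hcn₀]
    abel
  rw [hsplit]
  refine norm_sub_sum_add_sum_le_of_forall_subset
    (erase_subset_erase _ (hB₀.trans (sdiff_subset.trans subset_union_left)))
    (fun n hn => hc n (mem_of_mem_erase hn)) fun S hS => ?_
  refine hK.norm_sub_sum_coord_le hbi (fun n hn => ?_) ?_ x a
  · have hn₀A : n₀ ∉ A := (mem_sdiff.mp (hB₀ hn₀)).2
    have hnS : n ∉ S := fun h => (mem_sdiff.mp (hB₀ (mem_of_mem_erase (hS h)))).2 hn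
    exact mem_sdiff.mpr ⟨mem_erase.mpr ⟨fun h => hn₀A (h ▸ hn), mem_union_right _ hn⟩, hnS⟩
  · calc (((Λ ∪ A).erase n₀) \ S).card ≤ ((Λ ∪ A).erase n₀).card := card_le_card sdiff_subset
      _ = (Λ ∪ A).card - 1 := card_erase_of_mem hn₀Λ
      _ ≤ 2 * m - 1 := by have := card_union_le Λ A; omega

theorem exists_norm_sub_sum_coord_add_smul_sum_le (hK : IsComplUncondConst e f (2 * m - 1) K)
    (hbi : IsBiorthogonal e f) {τ : ℝ} {x : X} {Λ A : Finset ι}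
    (hm : 1 ≤ m) (hΛ : Λ.card = m) (hgreedy : IsWeakGreedy f τ x Λ)
    (hA : A.card ≤ m) (a : ι → ℝ) :
    ∃ (α : ℝ) (B₀ : Finset ι) (ε : ι → ℝ), 0 ≤ α ∧ (∀ n ∉ Λ, τ * |f n x| ≤ α) ∧ B₀ ⊆ Λ ∧
      B₀.card = (A \ Λ).card ∧ (∀ n ∈ B₀, |ε n| = 1) ∧
      ‖x - ∑ n ∈ Λ ∪ A \ Λ, f n x • e n + α • ∑ n ∈ B₀, ε n • e n‖
        ≤ K * ‖x - ∑ n ∈ A, a n • e n‖ := by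
  rw [union_sdiff_self_eq_union]
  rcases (A \ Λ).eq_empty_or_nonempty with hΓ | hΓ
  · obtain ⟨i, hi⟩ : Λ.Nonempty := card_pos.mp (by omega)
    have hAΛ : A ⊆ Λ := sdiff_eq_empty_iff_subset.mp hΓ
    refine ⟨|f i x|, ∅, 1, abs_nonneg _, hgreedy i hi, empty_subset _, by simp [hΓ], by simp, ?_⟩
    rw [union_eq_left.mpr hAΛ, sum_empty, smul_zero, add_zero]
    exact hK.norm_sub_sum_coord_le hbi hAΛ (by omega) x a
  · have hcard : (A \ Λ).card ≤ (Λ \ A).card := by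
      have h₁ := card_sdiff_add_card_inter A Λ
      have h₂ := card_sdiff_add_card_inter Λ A
      rw [inter_comm] at h₂
      omega
    obtain ⟨n₀, hn₀, hmin⟩ := (Λ \ A).exists_min_image (fun n => |f n x|)
      (card_pos.mp ((card_pos.mpr hΓ).trans_le hcard))
    obtain ⟨B₀, hn₀B₀, hB₀, hB₀card⟩ := exists_subsuperset_card_eq (singleton_subset_iff.mpr hn₀)
      (by simpa using card_pos.mpr hΓ) hcard
    have hn₀Λ : n₀ ∈ Λ := (mem_sdiff.mp hn₀).1
    exact ⟨|f n₀ x|, B₀, fun n => if 0 ≤ f n x then 1 else -1, abs_nonneg _, hgreedy n₀ hn₀Λ,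
      hB₀.trans sdiff_subset, hB₀card, fun n _ => by dsimp only; split_ifs <;> simp,
      norm_sub_sum_coord_add_smul_sum_le hK hbi hΛ.le hA hB₀ (singleton_subset_iff.mp hn₀B₀)
        (fun n hn => hmin n (hB₀ hn)) a⟩

end IsComplUncondConst

end

theorem stmt_5_general
    {X : Type*} [NormedAddCommGroup X] [NormedSpace ℝ X]
    (e : ℕ → X) (f : ℕ → X →L[ℝ] ℝ)
    (hbi : ∀ i j, f i (e j) = if i = j then (1 : ℝ) else 0)
    (τ : ℝ) (hτ : 0 < τ) (m : ℕ) (hm : 1 ≤ m)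
    (kc ν : ℝ)
    (hkc : ∀ A : Finset ℕ, A.card ≤ 2 * m - 1 → ∀ x : X,
      ‖x - ∑ n ∈ A, f n x • e n‖ ≤ kc * ‖x‖)
    (hν : ∀ (x : X), (∀ n, |f n x| ≤ 1 / τ) →
      ∀ (A B : Finset ℕ), A.card = B.card → B.card ≤ m →
      (∀ n ∈ A, f n x = 0) → (∀ n ∈ B, f n x = 0) → Disjoint A B →
      ∀ ε δ : ℕ → ℝ, (∀ n ∈ A, |ε n| = 1) → (∀ n ∈ B, |δ n| = 1) →
      ‖τ • x + ∑ n ∈ B, δ n • e n‖ ≤ ν * ‖x + ∑ n ∈ A, ε n • e n‖) :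
    ∀ (x : X) (Λ : Finset ℕ), Λ.card = m →
      (∀ i ∈ Λ, ∀ j ∉ Λ, τ * |f j x| ≤ |f i x|) →
      ∀ (A : Finset ℕ) (a : ℕ → ℝ), A.card ≤ m →
      ‖x - ∑ n ∈ Λ, f n x • e n‖
        ≤ (kc * ν / τ) * ‖x - ∑ n ∈ A, a n • e n‖ := by
  intro x Λ hΛ hgreedy A a hA
  obtain ⟨α, B₀, ε, hα, hsmall, hB₀Λ, hB₀card, hε, hbound⟩ :=
    IsComplUncondConst.exists_norm_sub_sum_coord_add_smul_sum_le hkc hbi hm hΛ hgreedy hA a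
  have hΓm : (A \ Λ).card ≤ m := (card_le_card sdiff_subset).trans hA
  calc ‖x - ∑ n ∈ Λ, f n x • e n‖
      ≤ ν / τ * ‖x - ∑ n ∈ Λ ∪ A \ Λ, f n x • e n + α • ∑ n ∈ B₀, ε n • e n‖ :=
        HasPropertyA.norm_sub_sum_coord_le hν hbi hτ hα hsmall sdiff_disjoint hΓm hB₀Λ hB₀card hε
    _ ≤ ν / τ * (kc * ‖x - ∑ n ∈ A, a n • e n‖) := by
        have hν0 := HasPropertyA.pos hν hbi hτ hm zero_ne_one
        gcongr
    _ = kc * ν / τ * ‖x - ∑ n ∈ A, a n • e n‖ := by ring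

/-- Theorem 1.1 (upper bound): `L_{m,τ} ≤ k_{2m-1}^c · ν_{m,τ}/τ`. -/
theorem stmt_5
    {X : Type*} [NormedAddCommGroup X] [NormedSpace ℝ X] [CompleteSpace X]
    (e : ℕ → X) (f : ℕ → X →L[ℝ] ℝ)
    (hbi : ∀ i j, f i (e j) = if i = j then (1 : ℝ) else 0)
    (htotal : ∀ x : X, (∀ n, f n x = 0) → x = 0)
    (hdense : Dense (Submodule.span ℝ (Set.range e) : Set X))
    (τ : ℝ) (hτ : 0 < τ) (hτ1 : τ ≤ 1) (m : ℕ) (hm : 1 ≤ m)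
    (kc ν : ℝ)
    (hkc : ∀ A : Finset ℕ, A.card ≤ 2 * m - 1 → ∀ x : X,
      ‖x - ∑ n ∈ A, f n x • e n‖ ≤ kc * ‖x‖)
    (hν : ∀ (x : X), (∀ n, |f n x| ≤ 1 / τ) →
      ∀ (A B : Finset ℕ), A.card = B.card → B.card ≤ m →
      (∀ n ∈ A, f n x = 0) → (∀ n ∈ B, f n x = 0) → Disjoint A B →
      ∀ ε δ : ℕ → ℝ, (∀ n ∈ A, |ε n| = 1) → (∀ n ∈ B, |δ n| = 1) →
      ‖τ • x + ∑ n ∈ B, δ n • e n‖ ≤ ν * ‖x + ∑ n ∈ A, ε n • e n‖) :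
    ∀ (x : X) (Λ : Finset ℕ), Λ.card = m →
      (∀ i ∈ Λ, ∀ j ∉ Λ, τ * |f j x| ≤ |f i x|) →
      ∀ (A : Finset ℕ) (a : ℕ → ℝ), A.card ≤ m →
      ‖x - ∑ n ∈ Λ, f n x • e n‖
        ≤ (kc * ν / τ) * ‖x - ∑ n ∈ A, a n • e n‖ :=
  stmt_5_general e f hbi τ hτ m hm kc ν hkc hν
end

section
/- Let X be a Banach space with a Schauder basis (e_n) with basis constant K_b = sup_m ‖S_m‖, where S_m(x) = ∑_{n=1}^m e_n^*(x) e_n. Fix τ ∈ (0,1] and m ∈ ℕ. Let L^{ch}_{m,τ} be the smallest constant such that ‖x − CG(x)‖ ≤ L^{ch}_{m,τ} σ_m(x) for every Chebyshev τ-greedy operator CG of order m (where CG(x) minimizes ‖x − ∑_{n∈Λ} a_n e_n‖ over scalars, for some τ-weak greedy set Λ of x of size m) and σ_m(x) is the best m-term approximation error. Then g_{m,τ}^c ≤ K_b · L^{ch}_{m,τ} (1 + L^{ch}_{m,τ} + L^{ch}_{m,τ} K_b), and consequently L^{ch}_{m,τ} ≥ (1/K_b) (g_{m,τ}^c/3)^{1/2}.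 -/
/-!
Let `t` be the smallest coefficient of `x` on the greedy set `Λ` and add the plateau
`T = t (e_N + ⋯ + e_{N+m-1})` beyond the support of `x`. For `z = x + T`, `Λ` padded by plateau
indices is greedy and `T` is an `m`-term competitor, so the Chebyshev residual is at most `L ‖x‖`;
cutting it with `S_N` bounds its `Λ`-part `G` by `‖x - G‖ ≤ K_b L ‖x‖`. For `w = x - P_Λ x + T`
the plateau itself is greedy, `-P_Λ x` plus the remaining part of the first approximant is a
competitor, and cutting with `S_N` once more gives
`‖x - P_Λ x‖ ≤ K_b L (1 + L + L K_b) ‖x‖`. Since `S_N x → x`, finitely supported `x` suffice.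
The lower bound for `L` is then arithmetic, as `K_b ≥ 1` and `L ≥ 1`.
-/

open Filter Topology Finset

namespace SchauderBasis

variable {X : Type*} [NormedAddCommGroup X] [NormedSpace ℝ X]

def Biorthogonal (e : ℕ → X) (f : ℕ → X →L[ℝ] ℝ) : Prop :=
  ∀ i j, f i (e j) = if i = j then (1 : ℝ) else 0

def partialSum (e : ℕ → X) (f : ℕ → X →L[ℝ] ℝ) (N : ℕ) : X →L[ℝ] X :=
  ∑ n ∈ range N, (f n).smulRight (e n)

def IsWeakGreedy (f : ℕ → X →L[ℝ] ℝ) (τ : ℝ) (x : X) (Λ : Finset ℕ) : Prop :=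
  ∀ i ∈ Λ, ∀ j ∉ Λ, τ * |f j x| ≤ |f i x|

-- On each τ-weak greedy set of size `m` some approximant is within the factor `L` of `σ_m(x)`.
def NearBestOnGreedySets (e : ℕ → X) (f : ℕ → X →L[ℝ] ℝ) (τ : ℝ) (m : ℕ) (L : ℝ) : Prop :=
  ∀ (x : X) (Λ : Finset ℕ), Λ.card = m → IsWeakGreedy f τ x Λ →
    ∃ b : ℕ → ℝ, ∀ (A : Finset ℕ) (a : ℕ → ℝ), A.card ≤ m →
      ‖x - ∑ n ∈ Λ, b n • e n‖ ≤ L * ‖x - ∑ n ∈ A, a n • e n‖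

variable {e : ℕ → X} {f : ℕ → X →L[ℝ] ℝ} {τ Kb L t : ℝ} {m N : ℕ} {x : X} {Λ : Finset ℕ}

theorem partialSum_apply (N : ℕ) (x : X) :
    partialSum e f N x = ∑ n ∈ range N, f n x • e n := by
  simp [partialSum]

theorem coeff_sum_smul (hbi : Biorthogonal e f) (A : Finset ℕ) (c : ℕ → ℝ) (n : ℕ) :
    f n (∑ k ∈ A, c k • e k) = if n ∈ A then c n else 0 := by
  simp only [map_sum, map_smul, smul_eq_mul, hbi n, mul_ite, mul_one, mul_zero]
  exact sum_ite_eq A n c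

theorem coeff_partialSum (hbi : Biorthogonal e f) (N n : ℕ) (x : X) :
    f n (partialSum e f N x) = if n < N then f n x else 0 := by
  simp only [partialSum_apply, coeff_sum_smul hbi, mem_range]

theorem partialSum_sum_smul (hbi : Biorthogonal e f) (N : ℕ) (A : Finset ℕ) (c : ℕ → ℝ) :
    partialSum e f N (∑ k ∈ A, c k • e k) = ∑ k ∈ A with k < N, c k • e k := by
  simp only [partialSum_apply, coeff_sum_smul hbi, ite_smul, zero_smul, ← sum_filter]
  congr 1
  ext k
  simp [and_comm]

theorem partialSum_sum_smul_of_lt (hbi : Biorthogonal e f) {A : Finset ℕ} (hA : ∀ k ∈ A, k < N)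
    (c : ℕ → ℝ) : partialSum e f N (∑ k ∈ A, c k • e k) = ∑ k ∈ A, c k • e k := by
  rw [partialSum_sum_smul hbi, filter_true_of_mem hA]

theorem partialSum_sum_smul_of_le (hbi : Biorthogonal e f) {A : Finset ℕ} (hA : ∀ k ∈ A, N ≤ k)
    (c : ℕ → ℝ) : partialSum e f N (∑ k ∈ A, c k • e k) = 0 := by
  rw [partialSum_sum_smul hbi, filter_false_of_mem fun k hk => not_lt.2 (hA k hk), sum_empty]

theorem partialSum_partialSum (hbi : Biorthogonal e f) (N : ℕ) (x : X) :
    partialSum e f N (partialSum e f N x) = partialSum e f N x := by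
  rw [partialSum_apply N x, partialSum_sum_smul_of_lt hbi fun k hk => mem_range.1 hk]

theorem coeff_eq_zero_of_partialSum_eq (hbi : Biorthogonal e f) (hx : partialSum e f N x = x)
    {n : ℕ} (hn : N ≤ n) : f n x = 0 := by
  rw [← hx, coeff_partialSum hbi, if_neg (not_lt.2 hn)]

theorem one_le_of_norm_partialSum_le (hbi : Biorthogonal e f)
    (hS : ∀ N x, ‖partialSum e f N x‖ ≤ Kb * ‖x‖) : 1 ≤ Kb := by
  have he : partialSum e f 1 (e 0) = e 0 := by simp [partialSum_apply, hbi 0 0]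
  have hpos : 0 < ‖e 0‖ := norm_pos_iff.2 fun h => by simpa [h] using hbi 0 0
  have := hS 1 (e 0)
  rw [he] at this
  nlinarith

theorem tendsto_partialSum (hbi : Biorthogonal e f)
    (hdense : Dense (Submodule.span ℝ (Set.range e) : Set X))
    (hS : ∀ N x, ‖partialSum e f N x‖ ≤ Kb * ‖x‖) (x : X) :
    Tendsto (fun N => partialSum e f N x) atTop (𝓝 x) := by
  have hequi : Equicontinuous (DFunLike.coe ∘ partialSum e f) :=
    (NormedSpace.equicontinuous_TFAE (partialSum e f)).out 1 3 |>.mpr (Exists.intro Kb hS)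
  have hclosed : IsClosed {x : X | Tendsto (fun N => partialSum e f N x) atTop (𝓝 x)} :=
    hequi.isClosed_setOfPred_tendsto continuous_id
  refine (hclosed.closure_subset_iff.2 fun y hy => ?_) (hdense x)
  induction hy using Submodule.span_induction with
  | mem y hy =>
    obtain ⟨k, rfl⟩ := hy
    refine tendsto_atTop_of_eventually_const (i₀ := k + 1) fun N hN => ?_
    simpa using partialSum_sum_smul_of_lt hbi (A := {k}) (by simpa using hN) fun _ => 1
  | zero => simp
  | add y z _ _ hy hz => simpa using hy.add hz
  | smul a y _ hy => simpa using hy.const_smul a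

theorem one_le_of_nearBestOnGreedySets (hbi : Biorthogonal e f) (hτ1 : τ ≤ 1)
    (hL : NearBestOnGreedySets e f τ m L) : 1 ≤ L := by
  -- `x₀ = e_0 + ⋯ + e_m` compared with its own approximant gives `‖R‖ ≤ L ‖R‖` with `R ≠ 0`.
  set x₀ : X := ∑ n ∈ range (m + 1), (1 : ℝ) • e n
  have hgreedy : IsWeakGreedy f τ x₀ (range m) := by
    intro i hi j _
    have hi' : i ∈ range (m + 1) := mem_range.2 (Nat.lt_succ_of_lt (mem_range.1 hi))
    rw [coeff_sum_smul hbi, coeff_sum_smul hbi, if_pos hi']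
    split_ifs <;> simp [hτ1]
  obtain ⟨b, hb⟩ := hL x₀ (range m) (card_range m) hgreedy
  set R := x₀ - ∑ n ∈ range m, b n • e n
  have hR : 0 < ‖R‖ := by
    refine norm_pos_iff.2 fun h => ?_
    have hfR : f m R = 1 := by
      rw [map_sub, coeff_sum_smul hbi, coeff_sum_smul hbi, if_pos (self_mem_range_succ m),
        if_neg notMem_range_self, sub_zero]
    simp [h] at hfR
  have := hb (range m) b (card_range m).le
  nlinarith

theorem IsWeakGreedy.partialSum_of_forall_lt (hbi : Biorthogonal e f) (h : IsWeakGreedy f τ x Λ)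
    (hΛ : ∀ i ∈ Λ, i < N) : IsWeakGreedy f τ (partialSum e f N x) Λ := by
  intro i hi j hj
  rw [coeff_partialSum hbi, coeff_partialSum hbi, if_pos (hΛ i hi)]
  split_ifs
  · exact h i hi j hj
  · simp

theorem IsWeakGreedy.exists_threshold (hbi : Biorthogonal e f) (hτ1 : τ ≤ 1)
    (h : IsWeakGreedy f τ x Λ) (hx : partialSum e f N x = x) :
    ∃ t, 0 ≤ t ∧ (∀ i ∈ Λ, t ≤ |f i x|) ∧ ∀ j ∉ Λ, τ * |f j x| ≤ t := by
  rcases Λ.eq_empty_or_nonempty with rfl | hne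
  · have hsum : 0 ≤ ∑ n ∈ range N, |f n x| := sum_nonneg fun _ _ => abs_nonneg _
    refine ⟨_, hsum, by simp, fun j _ => (mul_le_of_le_one_left (abs_nonneg _) hτ1).trans ?_⟩
    by_cases hj : j < N
    · exact single_le_sum (f := fun n => |f n x|) (fun _ _ => abs_nonneg _) (mem_range.2 hj)
    · rwa [coeff_eq_zero_of_partialSum_eq hbi hx (not_lt.1 hj), abs_zero]
  · obtain ⟨i₀, hi₀, hmin⟩ := Λ.exists_min_image (fun i => |f i x|) hne
    exact ⟨|f i₀ x|, abs_nonneg _, hmin, h i₀ hi₀⟩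

theorem isWeakGreedy_add_plateau (hbi : Biorthogonal e f) (hτ1 : τ ≤ 1) {B Γ : Finset ℕ}
    (hx : ∀ n, N ≤ n → f n x = 0) (hΛ : ∀ i ∈ Λ, i < N) (hΓ : ∀ n ∈ Γ, N ≤ n) (hB : B ⊆ Γ)
    (ht0 : 0 ≤ t) (hin : ∀ i ∈ Λ, t ≤ |f i x|) (hout : ∀ j ∉ Λ, τ * |f j x| ≤ t) :
    IsWeakGreedy f τ (x + ∑ n ∈ Γ, t • e n) (Λ ∪ B) := by
  have hz : ∀ n, f n (x + ∑ k ∈ Γ, t • e k) = f n x + if n ∈ Γ then t else 0 :=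
    fun n => by rw [map_add, coeff_sum_smul hbi]
  have hlow : ∀ i ∈ Λ ∪ B, t ≤ |f i (x + ∑ k ∈ Γ, t • e k)| := by
    intro i hi
    rw [hz]
    rcases mem_union.1 hi with hiΛ | hiB
    · rw [if_neg fun hiΓ => (hΛ i hiΛ).not_ge (hΓ i hiΓ), add_zero]
      exact hin i hiΛ
    · rw [if_pos (hB hiB), hx i (hΓ i (hB hiB)), zero_add, abs_of_nonneg ht0]
  have hup : ∀ j ∉ Λ ∪ B, τ * |f j (x + ∑ k ∈ Γ, t • e k)| ≤ t := by
    intro j hj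
    rw [hz]
    by_cases hjΓ : j ∈ Γ
    · rw [if_pos hjΓ, hx j (hΓ j hjΓ), zero_add, abs_of_nonneg ht0]
      exact mul_le_of_le_one_left ht0 hτ1
    · rw [if_neg hjΓ, add_zero]
      exact hout j fun hjΛ => hj (mem_union_left _ hjΛ)
  exact fun i hi j hj => (hup j hj).trans (hlow i hi)

theorem exists_norm_add_plateau_sub_le (hbi : Biorthogonal e f) (hτ1 : τ ≤ 1)
    (hS : ∀ N x, ‖partialSum e f N x‖ ≤ Kb * ‖x‖) (hL : NearBestOnGreedySets e f τ m L)
    (hx : partialSum e f N x = x) (hΛ : ∀ i ∈ Λ, i < N) (hcard : Λ.card ≤ m) (ht0 : 0 ≤ t)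
    (hin : ∀ i ∈ Λ, t ≤ |f i x|) (hout : ∀ j ∉ Λ, τ * |f j x| ≤ t) :
    ∃ c : ℕ → ℝ, ‖x + ∑ n ∈ Ico N (N + m), t • e n
      - ∑ n ∈ Ico N (N + (m - Λ.card)), c n • e n‖ ≤ (1 + L + L * Kb) * ‖x‖ := by
  set Γ := Ico N (N + m)
  set B := Ico N (N + (m - Λ.card))
  have hΓ : ∀ n ∈ Γ, N ≤ n := fun n hn => (mem_Ico.1 hn).1
  have hB : ∀ n ∈ B, N ≤ n := fun n hn => (mem_Ico.1 hn).1
  have hdisj : Disjoint Λ B := disjoint_left.2 fun i hi hiB => (hΛ i hi).not_ge (hB i hiB)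
  have hcardΓ : Γ.card = m := by simp [Γ]
  have hcardΛB : (Λ ∪ B).card = m := by
    rw [card_union_of_disjoint hdisj, Nat.card_Ico]
    omega
  obtain ⟨b, hb⟩ := hL _ _ hcardΛB <| isWeakGreedy_add_plateau hbi hτ1
    (fun n => coeff_eq_zero_of_partialSum_eq hbi hx) hΛ hΓ (Ico_subset_Ico_right (by omega))
    ht0 hin hout
  refine ⟨b, ?_⟩
  set u := x + ∑ n ∈ Γ, t • e n - ∑ n ∈ B, b n • e n
  set G := ∑ n ∈ Λ, b n • e n
  have hr : ‖u - G‖ ≤ L * ‖x‖ := by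
    have := hb Γ (fun _ => t) hcardΓ.le
    rwa [sum_union hdisj, add_sub_cancel_right, sub_add_eq_sub_sub_swap] at this
  have hSr : partialSum e f N (u - G) = x - G := by
    simp only [u, G, map_sub, map_add, hx, partialSum_sum_smul_of_le hbi hΓ,
      partialSum_sum_smul_of_le hbi hB, partialSum_sum_smul_of_lt hbi hΛ, add_zero, sub_zero]
  have hKb : 0 ≤ Kb := zero_le_one.trans (one_le_of_norm_partialSum_le hbi hS)
  have hxG : ‖x - G‖ ≤ Kb * (L * ‖x‖) :=
    hSr ▸ (hS N _).trans (mul_le_mul_of_nonneg_left hr hKb)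
  calc ‖u‖ = ‖(u - G) - (x - G) + x‖ := by congr 1; abel
    _ ≤ ‖u - G‖ + ‖x - G‖ + ‖x‖ := (norm_add_le _ _).trans (by gcongr; exact norm_sub_le _ _)
    _ ≤ (1 + L + L * Kb) * ‖x‖ := by linarith

theorem norm_sub_sum_le_of_plateau (hbi : Biorthogonal e f) (hτ1 : τ ≤ 1)
    (hS : ∀ N x, ‖partialSum e f N x‖ ≤ Kb * ‖x‖) (hL : NearBestOnGreedySets e f τ m L)
    (hx : partialSum e f N x = x) (hΛ : ∀ i ∈ Λ, i < N) (ht0 : 0 ≤ t)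
    (hout : ∀ j ∉ Λ, τ * |f j x| ≤ t) {B : Finset ℕ} (hB : ∀ n ∈ B, N ≤ n)
    (hcard : (Λ ∪ B).card ≤ m) (c : ℕ → ℝ) :
    ‖x - ∑ n ∈ Λ, f n x • e n‖
      ≤ Kb * L * ‖x + ∑ n ∈ Ico N (N + m), t • e n - ∑ n ∈ B, c n • e n‖ := by
  set Γ := Ico N (N + m)
  set P := ∑ n ∈ Λ, f n x • e n
  have hΓ : ∀ n ∈ Γ, N ≤ n := fun n hn => (mem_Ico.1 hn).1
  have hP : ∀ n, f n (x - P) = if n ∈ Λ then 0 else f n x := fun n => by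
    rw [map_sub, coeff_sum_smul hbi]
    split_ifs <;> simp
  have hgreedy : IsWeakGreedy f τ (x - P + ∑ n ∈ Γ, t • e n) Γ := by
    refine empty_union Γ ▸ isWeakGreedy_add_plateau hbi hτ1 (fun n hn => ?_) (by simp) hΓ
      subset_rfl ht0 (by simp) fun j _ => ?_
    · rw [hP]
      split_ifs
      exacts [rfl, coeff_eq_zero_of_partialSum_eq hbi hx hn]
    · rw [hP]
      split_ifs with hj
      exacts [by simpa using ht0, hout j hj]
  obtain ⟨b, hb⟩ := hL _ Γ (by simp [Γ]) hgreedy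
  have hdisj : Disjoint Λ B := disjoint_left.2 fun i hi hiB => (hΛ i hi).not_ge (hB i hiB)
  -- Against this `m`-term competitor the residual of `w = x - P + T` is `x + T - ∑_B c`.
  have hcomp : ∑ n ∈ Λ ∪ B, (if n ∈ Λ then -f n x else c n) • e n
      = -P + ∑ n ∈ B, c n • e n := by
    rw [sum_union hdisj, ← sum_neg_distrib]
    congr 1 <;> refine sum_congr rfl fun n hn => ?_
    · rw [if_pos hn, neg_smul]
    · rw [if_neg (disjoint_right.1 hdisj hn)]
  have happrox := hb (Λ ∪ B) (fun n => if n ∈ Λ then -f n x else c n) hcard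
  rw [hcomp, show ∀ y z : X, x - P + y - (-P + z) = x + y - z by intros; abel] at happrox
  have hSr : partialSum e f N (x - P + ∑ n ∈ Γ, t • e n - ∑ n ∈ Γ, b n • e n) = x - P := by
    simp only [P, map_sub, map_add, hx, partialSum_sum_smul_of_lt hbi hΛ,
      partialSum_sum_smul_of_le hbi hΓ, add_zero, sub_zero]
  have hKb : 0 ≤ Kb := zero_le_one.trans (one_le_of_norm_partialSum_le hbi hS)
  calc ‖x - P‖ = ‖partialSum e f N (x - P + ∑ n ∈ Γ, t • e n - ∑ n ∈ Γ, b n • e n)‖ := by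
        rw [hSr]
    _ ≤ Kb * ‖x - P + ∑ n ∈ Γ, t • e n - ∑ n ∈ Γ, b n • e n‖ := hS N _
    _ ≤ Kb * (L * ‖x + ∑ n ∈ Γ, t • e n - ∑ n ∈ B, c n • e n‖) := by gcongr
    _ = _ := by ring

theorem norm_sub_sum_le_of_partialSum_eq (hbi : Biorthogonal e f) (hτ1 : τ ≤ 1)
    (hS : ∀ N x, ‖partialSum e f N x‖ ≤ Kb * ‖x‖) (hL : NearBestOnGreedySets e f τ m L)
    (hx : partialSum e f N x = x) (hΛ : ∀ i ∈ Λ, i < N) (hcard : Λ.card ≤ m)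
    (hgreedy : IsWeakGreedy f τ x Λ) :
    ‖x - ∑ n ∈ Λ, f n x • e n‖ ≤ Kb * L * (1 + L + L * Kb) * ‖x‖ := by
  obtain ⟨t, ht0, hin, hout⟩ := hgreedy.exists_threshold hbi hτ1 hx
  obtain ⟨c, hc⟩ := exists_norm_add_plateau_sub_le hbi hτ1 hS hL hx hΛ hcard ht0 hin hout
  have hcardB : (Λ ∪ Ico N (N + (m - Λ.card))).card ≤ m :=
    card_union_le _ _ |>.trans (by simp; omega)
  have hKbL : 0 ≤ Kb * L := mul_nonneg
    (zero_le_one.trans (one_le_of_norm_partialSum_le hbi hS))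
    (zero_le_one.trans (one_le_of_nearBestOnGreedySets hbi hτ1 hL))
  calc _ ≤ _ := norm_sub_sum_le_of_plateau hbi hτ1 hS hL hx hΛ ht0 hout
        (fun n hn => (mem_Ico.1 hn).1) hcardB c
    _ ≤ Kb * L * ((1 + L + L * Kb) * ‖x‖) := by gcongr
    _ = _ := by ring

theorem norm_sub_sum_le (hbi : Biorthogonal e f)
    (hdense : Dense (Submodule.span ℝ (Set.range e) : Set X)) (hτ1 : τ ≤ 1)
    (hS : ∀ N x, ‖partialSum e f N x‖ ≤ Kb * ‖x‖) (hL : NearBestOnGreedySets e f τ m L)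
    (hcard : Λ.card ≤ m) (hgreedy : IsWeakGreedy f τ x Λ) :
    ‖x - ∑ n ∈ Λ, f n x • e n‖ ≤ Kb * L * (1 + L + L * Kb) * ‖x‖ := by
  obtain ⟨N₀, hN₀⟩ := Λ.exists_nat_subset_range
  have hlim := tendsto_partialSum hbi hdense hS x
  refine le_of_tendsto_of_tendsto (hlim.sub_const _).norm (hlim.norm.const_mul _) ?_
  filter_upwards [eventually_ge_atTop N₀] with N hN
  have hΛN : ∀ i ∈ Λ, i < N := fun i hi => (mem_range.1 (hN₀ hi)).trans_le hN
  have hP : ∑ n ∈ Λ, f n (partialSum e f N x) • e n = ∑ n ∈ Λ, f n x • e n :=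
    sum_congr rfl fun n hn => by rw [coeff_partialSum hbi, if_pos (hΛN n hn)]
  simpa only [hP] using norm_sub_sum_le_of_partialSum_eq hbi hτ1 hS hL
    (partialSum_partialSum hbi N x) hΛN hcard (hgreedy.partialSum_of_forall_lt hbi hΛN)

end SchauderBasis

open SchauderBasis

theorem inv_mul_sqrt_div_three_le {K L g : ℝ} (hK : 1 ≤ K) (hL : 1 ≤ L)
    (hg : g ≤ K * L * (1 + L + L * K)) : 1 / K * √(g / 3) ≤ L := by
  have hKL : 1 ≤ K * L := one_le_mul_of_one_le_of_one_le hK hL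
  have hLKL : L ≤ K * L := le_mul_of_one_le_left (by linarith) hK
  have hg3 : g ≤ 3 * (K * L) ^ 2 := hg.trans <| by
    nlinarith [mul_le_mul_of_nonneg_left (by linarith : 1 + L + L * K ≤ 3 * (K * L))
      (by linarith : 0 ≤ K * L)]
  have hsqrt : √(g / 3) ≤ K * L := Real.sqrt_le_iff.2 ⟨by positivity, by linarith⟩
  rw [one_div, inv_mul_le_iff₀ (by positivity)]
  linarith

theorem stmt_8_general
    {X : Type*} [NormedAddCommGroup X] [NormedSpace ℝ X]
    (e : ℕ → X) (f : ℕ → X →L[ℝ] ℝ)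
    (hbi : ∀ i j, f i (e j) = if i = j then (1 : ℝ) else 0)
    (hdense : Dense (Submodule.span ℝ (Set.range e) : Set X))
    (τ : ℝ) (hτ1 : τ ≤ 1) (m : ℕ)
    (Kb : ℝ)
    (hKb : ∀ (N : ℕ) (x : X),
      ‖∑ n ∈ Finset.range N, f n x • e n‖ ≤ Kb * ‖x‖)
    (g : ℝ)
    -- `g` is the weak quasi-greedy constant `g_{m,τ}^c` (least such bound):
    (hg_least : ∀ c : ℝ,
      (∀ (x : X) (Λ : Finset ℕ), Λ.card ≤ m →
        (∀ i ∈ Λ, ∀ j ∉ Λ, τ * |f j x| ≤ |f i x|) →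
        ‖x - ∑ n ∈ Λ, f n x • e n‖ ≤ c * ‖x‖) → g ≤ c)
    (L : ℝ)
    -- every Chebyshev τ-greedy operator of order m is an `L`-approximation:
    (hL : ∀ (x : X) (Λ : Finset ℕ), Λ.card = m →
      (∀ i ∈ Λ, ∀ j ∉ Λ, τ * |f j x| ≤ |f i x|) →
      ∃ b : ℕ → ℝ,
        (∀ c : ℕ → ℝ,
          ‖x - ∑ n ∈ Λ, b n • e n‖ ≤ ‖x - ∑ n ∈ Λ, c n • e n‖) ∧
        (∀ (A : Finset ℕ) (a : ℕ → ℝ), A.card ≤ m →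
          ‖x - ∑ n ∈ Λ, b n • e n‖ ≤ L * ‖x - ∑ n ∈ A, a n • e n‖)) :
    g ≤ Kb * L * (1 + L + L * Kb) ∧ (1 / Kb) * Real.sqrt (g / 3) ≤ L := by
  have hS : ∀ N x, ‖partialSum e f N x‖ ≤ Kb * ‖x‖ := fun N x => by
    rw [partialSum_apply]
    exact hKb N x
  have hNearBest : NearBestOnGreedySets e f τ m L := fun x Λ hcard hgreedy =>
    (hL x Λ hcard hgreedy).imp fun _ hb => hb.2
  have hg : g ≤ Kb * L * (1 + L + L * Kb) := hg_least _ fun _ _ hcard hgreedy =>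
    norm_sub_sum_le hbi hdense hτ1 hS hNearBest hcard hgreedy
  exact ⟨hg, inv_mul_sqrt_div_three_le (one_le_of_norm_partialSum_le hbi hS)
    (one_le_of_nearBestOnGreedySets hbi hτ1 hNearBest) hg⟩

/-- Theorem 1.5: `g_{m,τ}^c ≤ K_b·L^{ch}(1 + L^{ch} + L^{ch}K_b)` and
consequently `L^{ch} ≥ (1/K_b)·√(g_{m,τ}^c/3)`, for a Schauder basis with
basis constant `K_b`. -/
theorem stmt_8
    {X : Type*} [NormedAddCommGroup X] [NormedSpace ℝ X] [CompleteSpace X]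
    (e : ℕ → X) (f : ℕ → X →L[ℝ] ℝ)
    (hbi : ∀ i j, f i (e j) = if i = j then (1 : ℝ) else 0)
    (htotal : ∀ x : X, (∀ n, f n x = 0) → x = 0)
    (hdense : Dense (Submodule.span ℝ (Set.range e) : Set X))
    (τ : ℝ) (hτ : 0 < τ) (hτ1 : τ ≤ 1) (m : ℕ)
    (Kb : ℝ) (hKb1 : 1 ≤ Kb)
    (hKb : ∀ (N : ℕ) (x : X),
      ‖∑ n ∈ Finset.range N, f n x • e n‖ ≤ Kb * ‖x‖)
    (g : ℝ)
    -- `g` is the weak quasi-greedy constant `g_{m,τ}^c` (least such bound):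
    (hg_ub : ∀ (x : X) (Λ : Finset ℕ), Λ.card ≤ m →
      (∀ i ∈ Λ, ∀ j ∉ Λ, τ * |f j x| ≤ |f i x|) →
      ‖x - ∑ n ∈ Λ, f n x • e n‖ ≤ g * ‖x‖)
    (hg_least : ∀ c : ℝ,
      (∀ (x : X) (Λ : Finset ℕ), Λ.card ≤ m →
        (∀ i ∈ Λ, ∀ j ∉ Λ, τ * |f j x| ≤ |f i x|) →
        ‖x - ∑ n ∈ Λ, f n x • e n‖ ≤ c * ‖x‖) → g ≤ c)
    (L : ℝ) (hL0 : 0 ≤ L)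
    -- every Chebyshev τ-greedy operator of order m is an `L`-approximation:
    (hL : ∀ (x : X) (Λ : Finset ℕ), Λ.card = m →
      (∀ i ∈ Λ, ∀ j ∉ Λ, τ * |f j x| ≤ |f i x|) →
      ∃ b : ℕ → ℝ,
        (∀ c : ℕ → ℝ,
          ‖x - ∑ n ∈ Λ, b n • e n‖ ≤ ‖x - ∑ n ∈ Λ, c n • e n‖) ∧
        (∀ (A : Finset ℕ) (a : ℕ → ℝ), A.card ≤ m →
          ‖x - ∑ n ∈ Λ, b n • e n‖ ≤ L * ‖x - ∑ n ∈ A, a n • e n‖)) :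
    g ≤ Kb * L * (1 + L + L * Kb) ∧ (1 / Kb) * Real.sqrt (g / 3) ≤ L :=
  stmt_8_general e f hbi hdense τ hτ1 m Kb hKb g hg_least L hL
end

section
/- Let X be a Banach space with Markushevich basis and let 0 < τ₂ < τ₁ ≤ 1. Suppose the basis has C-property (A, τ₂): ‖τ₂ x + 1_{δB}‖ ≤ C ‖x + 1_{εA}‖ whenever ‖x‖_∞ ≤ 1/τ₂, |A| = |B| finite, A, B, supp(x) pairwise disjoint, and (ε), (δ) are signs. Then the basis has (C τ₁/τ₂)-property (A, τ₁): ‖τ₁ x + 1_{δB}‖ ≤ (C τ₁/τ₂) ‖x + 1_{εA}‖ whenever ‖x‖_∞ ≤ 1/τ₁, |A| = |B| finite, A, B, supp(x) pairwise disjoint, and (ε), (δ) are signs. -/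
/-!
Writing `τ₁ • x + y = (τ₁ / τ₂) • (τ₂ • x + (τ₂ / τ₁) • y)`, the vector `τ₂ • x + (τ₂ / τ₁) • y`
lies on the segment between `τ₂ • x + y` and `τ₂ • x - y`. Both endpoints are controlled by the
property (A, τ₂), applied with the signs `δ` and `-δ`, so by convexity of the norm so is the
point between them, and rescaling by `τ₁ / τ₂` gives the constant `C τ₁ / τ₂`.
-/

section

variable {E : Type*} [SeminormedAddCommGroup E] [NormedSpace ℝ E]

theorem norm_add_smul_le_of_abs_le_one {u v : E} {c M : ℝ} (hc : |c| ≤ 1)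
    (hadd : ‖u + v‖ ≤ M) (hsub : ‖u - v‖ ≤ M) : ‖u + c • v‖ ≤ M := by
  have hcomb : ((1 + c) / 2) • (u + v) + ((1 - c) / 2) • (u - v) = u + c • v := by
    match_scalars <;> ring
  rw [← mem_closedBall_zero_iff, ← hcomb]
  obtain ⟨hc₁, hc₂⟩ := abs_le.mp hc
  exact convex_closedBall (0 : E) M (mem_closedBall_zero_iff.mpr hadd)
    (mem_closedBall_zero_iff.mpr hsub) (by linarith) (by linarith) (by ring)

theorem norm_smul_add_le_of_le {s t M : ℝ} (hs : 0 < s) (hst : s ≤ t) {x y : E}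
    (hadd : ‖s • x + y‖ ≤ M) (hsub : ‖s • x - y‖ ≤ M) : ‖t • x + y‖ ≤ t / s * M := by
  have ht : 0 < t := hs.trans_le hst
  have hrescale : t • x + y = (t / s) • (s • x + (s / t) • y) := by
    match_scalars <;> field_simp
  have hratio : |s / t| ≤ 1 := by
    rw [abs_of_pos (by positivity)]
    exact (div_le_one ht).mpr hst
  rw [hrescale, norm_smul, Real.norm_of_nonneg (by positivity)]
  gcongr
  exact norm_add_smul_le_of_abs_le_one hratio hadd hsub

end

theorem stmt_10_general
    {X : Type*} [NormedAddCommGroup X] [NormedSpace ℝ X]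
    (e : ℕ → X) (f : ℕ → X →L[ℝ] ℝ)
    (τ₁ τ₂ : ℝ) (h2 : 0 < τ₂) (h21 : τ₂ < τ₁)
    (C : ℝ)
    (hC : ∀ (x : X), (∀ n, |f n x| ≤ 1 / τ₂) →
      ∀ (A B : Finset ℕ), A.card = B.card →
      (∀ n ∈ A, f n x = 0) → (∀ n ∈ B, f n x = 0) → Disjoint A B →
      ∀ ε δ : ℕ → ℝ, (∀ n ∈ A, |ε n| = 1) → (∀ n ∈ B, |δ n| = 1) →
      ‖τ₂ • x + ∑ n ∈ B, δ n • e n‖ ≤ C * ‖x + ∑ n ∈ A, ε n • e n‖) :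
    ∀ (x : X), (∀ n, |f n x| ≤ 1 / τ₁) →
      ∀ (A B : Finset ℕ), A.card = B.card →
      (∀ n ∈ A, f n x = 0) → (∀ n ∈ B, f n x = 0) → Disjoint A B →
      ∀ ε δ : ℕ → ℝ, (∀ n ∈ A, |ε n| = 1) → (∀ n ∈ B, |δ n| = 1) →
      ‖τ₁ • x + ∑ n ∈ B, δ n • e n‖
        ≤ (C * τ₁ / τ₂) * ‖x + ∑ n ∈ A, ε n • e n‖ := by
  intro x hx A B hcard hA hB hAB ε δ hε hδ
  have hx₂ : ∀ n, |f n x| ≤ 1 / τ₂ := fun n =>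
    (hx n).trans (one_div_le_one_div_of_le h2 h21.le)
  have hadd := hC x hx₂ A B hcard hA hB hAB ε δ hε hδ
  have hsub : ‖τ₂ • x - ∑ n ∈ B, δ n • e n‖ ≤ C * ‖x + ∑ n ∈ A, ε n • e n‖ := by
    simpa only [Pi.neg_apply, neg_smul, Finset.sum_neg_distrib, ← sub_eq_add_neg] using
      hC x hx₂ A B hcard hA hB hAB ε (-δ) hε fun n hn => (abs_neg (δ n)).trans (hδ n hn)
  calc ‖τ₁ • x + ∑ n ∈ B, δ n • e n‖
      ≤ τ₁ / τ₂ * (C * ‖x + ∑ n ∈ A, ε n • e n‖) :=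
        norm_smul_add_le_of_le h2 h21.le hadd hsub
    _ = (C * τ₁ / τ₂) * ‖x + ∑ n ∈ A, ε n • e n‖ := by ring

/-- Proposition 5.3(2): property (A, τ₂) implies (C·τ₁/τ₂)-property (A, τ₁)
for 0 < τ₂ < τ₁ ≤ 1. -/
theorem stmt_10
    {X : Type*} [NormedAddCommGroup X] [NormedSpace ℝ X] [CompleteSpace X]
    (e : ℕ → X) (f : ℕ → X →L[ℝ] ℝ)
    (hbi : ∀ i j, f i (e j) = if i = j then (1 : ℝ) else 0)
    (htotal : ∀ x : X, (∀ n, f n x = 0) → x = 0)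
    (hdense : Dense (Submodule.span ℝ (Set.range e) : Set X))
    (τ₁ τ₂ : ℝ) (h2 : 0 < τ₂) (h21 : τ₂ < τ₁) (h1 : τ₁ ≤ 1)
    (C : ℝ)
    (hC : ∀ (x : X), (∀ n, |f n x| ≤ 1 / τ₂) →
      ∀ (A B : Finset ℕ), A.card = B.card →
      (∀ n ∈ A, f n x = 0) → (∀ n ∈ B, f n x = 0) → Disjoint A B →
      ∀ ε δ : ℕ → ℝ, (∀ n ∈ A, |ε n| = 1) → (∀ n ∈ B, |δ n| = 1) →
      ‖τ₂ • x + ∑ n ∈ B, δ n • e n‖ ≤ C * ‖x + ∑ n ∈ A, ε n • e n‖) :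
    ∀ (x : X), (∀ n, |f n x| ≤ 1 / τ₁) →
      ∀ (A B : Finset ℕ), A.card = B.card →
      (∀ n ∈ A, f n x = 0) → (∀ n ∈ B, f n x = 0) → Disjoint A B →
      ∀ ε δ : ℕ → ℝ, (∀ n ∈ A, |ε n| = 1) → (∀ n ∈ B, |δ n| = 1) →
      ‖τ₁ • x + ∑ n ∈ B, δ n • e n‖
        ≤ (C * τ₁ / τ₂) * ‖x + ∑ n ∈ A, ε n • e n‖ :=
  stmt_10_general e f τ₁ τ₂ h2 h21 C hC
end

section
/- Let X be the completion of c_00 under a norm ‖·‖ = max{‖·‖₁, ‖·‖_{ℓ₂}}, where ‖·‖₁ is a semi-norm on c_00 and ‖·‖_{ℓ₂} is the ℓ₂ norm, and suppose the unit vectors form a basis. Assume there exists λ ≥ 1 such that for every sign sequence (δ) and every nonempty finite A ⊂ ℕ, ‖1_{δA}‖₁ ≤ λ|A|^{1/2}. Then for every τ ∈ (0,1], finite sets A, B with |A| = |B| = n ≥ 1, A, B, supp(x) pairwise disjoint, x ∈ c_00 with ‖x‖_∞ ≤ 1/τ, and signs (ε), (δ): ‖τx + 1_{δB}‖ ≤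 3λ‖x + 1_{εA}‖. -/
/-!
On `x + 1_{εA}` the `ℓ₂` part dominates both `‖τx + 1_{δB}‖_{ℓ₂}` (the supports are disjoint,
so squares add up, and `τ ≤ 1`) and `√|A|`. For the semi-norm, the triangle inequality gives
`‖τx + 1_{δB}‖₁ ≤ ‖x + 1_{εA}‖₁ + ‖1_{εA}‖₁ + ‖1_{δB}‖₁`, and the flatness hypothesis bounds
the last two terms by `λ√|A| ≤ λ‖x + 1_{εA}‖_{ℓ₂}` each.
-/

/-- The `ℓ₂` part of the norm on `c₀₀`. -/
noncomputable def l2norm (x : ℕ →₀ ℝ) : ℝ :=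
  Real.sqrt (∑ n ∈ x.support, (x n) ^ 2)

open Finset

lemma Seminorm.map_smul_add_le {E : Type*} [AddCommGroup E] [Module ℝ E] (p : Seminorm ℝ E)
    {τ : ℝ} (hτ : |τ| ≤ 1) (x u v : E) : p (τ • x + v) ≤ p (x + u) + p u + p v := by
  have hx : p x ≤ p (x + u) + p u := by simpa using map_sub_le_add p (x + u) u
  calc p (τ • x + v) ≤ |τ| * p x + p v := by
        simpa [map_smul_eq_mul] using map_add_le_add p (τ • x) v
    _ ≤ p x + p v := by gcongr; exact mul_le_of_le_one_left (apply_nonneg p x) hτ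
    _ ≤ p (x + u) + p u + p v := by gcongr

lemma l2norm_nonneg (v : ℕ →₀ ℝ) : 0 ≤ l2norm v := Real.sqrt_nonneg _

lemma l2norm_eq_sqrt_sum_sq_of_support_subset {v : ℕ →₀ ℝ} {s : Finset ℕ} (h : v.support ⊆ s) :
    l2norm v = √(∑ k ∈ s, v k ^ 2) := by
  unfold l2norm
  congr 1
  exact sum_subset h fun k _ hk => by simp [Finsupp.notMem_support_iff.mp hk]

lemma l2norm_smul (c : ℝ) (v : ℕ →₀ ℝ) : l2norm (c • v) = |c| * l2norm v := by
  rw [l2norm_eq_sqrt_sum_sq_of_support_subset Finsupp.support_smul, l2norm,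
    ← Real.sqrt_sq_eq_abs, ← Real.sqrt_mul (sq_nonneg c), mul_sum]
  simp only [Finsupp.smul_apply, smul_eq_mul, mul_pow]

lemma sum_single_apply {α M : Type*} [DecidableEq α] [AddCommMonoid M] (A : Finset α) (ε : α → M)
    (k : α) :
    (∑ n ∈ A, Finsupp.single n (ε n)) k = if k ∈ A then ε k else 0 := by
  simp [Finsupp.finsetSum_apply, Finsupp.single_apply]

lemma l2norm_add_sum_single_sq {x : ℕ →₀ ℝ} {A : Finset ℕ} {ε : ℕ → ℝ}
    (hAx : ∀ n ∈ A, x n = 0) (hε : ∀ n ∈ A, |ε n| = 1) :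
    l2norm (x + ∑ n ∈ A, Finsupp.single n (ε n)) ^ 2 = l2norm x ^ 2 + A.card := by
  have hdisj : Disjoint x.support A :=
    disjoint_left.mpr fun k hk hkA => Finsupp.mem_support_iff.mp hk (hAx k hkA)
  have hsupp : (x + ∑ n ∈ A, Finsupp.single n (ε n)).support ⊆ x.support ∪ A := by
    refine Finsupp.support_add.trans (union_subset_union subset_rfl fun k hk => ?_)
    by_contra hkA
    simp [sum_single_apply, hkA] at hk
  rw [l2norm_eq_sqrt_sum_sq_of_support_subset hsupp, l2norm,
    Real.sq_sqrt (sum_nonneg fun _ _ => sq_nonneg _),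
    Real.sq_sqrt (sum_nonneg fun _ _ => sq_nonneg _),
    sum_union hdisj, card_eq_sum_ones, Nat.cast_sum, Nat.cast_one]
  congr 1
  · refine sum_congr rfl fun k hk => ?_
    rw [Finsupp.add_apply, sum_single_apply, if_neg (disjoint_left.mp hdisj hk), add_zero]
  · refine sum_congr rfl fun k hk => ?_
    rw [Finsupp.add_apply, sum_single_apply, if_pos hk, hAx k hk, zero_add, ← sq_abs, hε k hk,
      one_pow]

lemma sqrt_card_le_l2norm_add_sum_single {x : ℕ →₀ ℝ} {A : Finset ℕ} {ε : ℕ → ℝ}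
    (hAx : ∀ n ∈ A, x n = 0) (hε : ∀ n ∈ A, |ε n| = 1) :
    √(A.card : ℝ) ≤ l2norm (x + ∑ n ∈ A, Finsupp.single n (ε n)) := by
  rw [Real.sqrt_le_left (l2norm_nonneg _), l2norm_add_sum_single_sq hAx hε]
  exact le_add_of_nonneg_left (sq_nonneg _)

lemma l2norm_smul_add_sum_single_le {x : ℕ →₀ ℝ} {A B : Finset ℕ} {ε δ : ℕ → ℝ} {τ : ℝ}
    (hτ : |τ| ≤ 1) (hcard : A.card = B.card)
    (hAx : ∀ n ∈ A, x n = 0) (hBx : ∀ n ∈ B, x n = 0)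
    (hε : ∀ n ∈ A, |ε n| = 1) (hδ : ∀ n ∈ B, |δ n| = 1) :
    l2norm (τ • x + ∑ n ∈ B, Finsupp.single n (δ n)) ≤
      l2norm (x + ∑ n ∈ A, Finsupp.single n (ε n)) := by
  have hBτx : ∀ n ∈ B, (τ • x) n = 0 := fun n hn => by simp [hBx n hn]
  refine (pow_le_pow_iff_left₀ (l2norm_nonneg _) (l2norm_nonneg _) two_ne_zero).mp ?_
  rw [l2norm_add_sum_single_sq hBτx hδ, l2norm_add_sum_single_sq hAx hε, l2norm_smul, mul_pow,
    hcard]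
  gcongr
  exact mul_le_of_le_one_left (sq_nonneg _) (pow_le_one₀ (abs_nonneg τ) hτ)

theorem stmt_11_general
    (n1 : (ℕ →₀ ℝ) → ℝ)
    (hadd : ∀ x y : ℕ →₀ ℝ, n1 (x + y) ≤ n1 x + n1 y)
    (hsmul : ∀ (a : ℝ) (x : ℕ →₀ ℝ), n1 (a • x) = |a| * n1 x)
    (lam : ℝ) (hlam : 1 ≤ lam)
    (hflat : ∀ (A : Finset ℕ) (δ : ℕ → ℝ), A.Nonempty →
      (∀ n ∈ A, |δ n| = 1) →
      n1 (∑ n ∈ A, Finsupp.single n (δ n)) ≤ lam * Real.sqrt A.card)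
    (τ : ℝ) (hτ : 0 < τ) (hτ1 : τ ≤ 1)
    (x : ℕ →₀ ℝ)
    (A B : Finset ℕ) (hcard : A.card = B.card) (hA : A.Nonempty)
    (hAx : ∀ n ∈ A, x n = 0) (hBx : ∀ n ∈ B, x n = 0)
    (ε δ : ℕ → ℝ) (hε : ∀ n ∈ A, |ε n| = 1) (hδ : ∀ n ∈ B, |δ n| = 1) :
    max (n1 (τ • x + ∑ n ∈ B, Finsupp.single n (δ n)))
        (l2norm (τ • x + ∑ n ∈ B, Finsupp.single n (δ n)))
      ≤ 3 * lam *
        max (n1 (x + ∑ n ∈ A, Finsupp.single n (ε n)))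
            (l2norm (x + ∑ n ∈ A, Finsupp.single n (ε n))) := by
  have hτabs : |τ| ≤ 1 := abs_le.mpr ⟨by linarith, hτ1⟩
  set a := ∑ n ∈ A, Finsupp.single n (ε n)
  set b := ∑ n ∈ B, Finsupp.single n (δ n)
  set M := max (n1 (x + a)) (l2norm (x + a))
  have hsqrt : √(A.card : ℝ) ≤ M :=
    (sqrt_card_le_l2norm_add_sum_single hAx hε).trans (le_max_right _ _)
  have hM : 0 ≤ M := (Real.sqrt_nonneg _).trans hsqrt
  have ha : n1 a ≤ lam * M := (hflat A ε hA hε).trans (by gcongr)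
  have hb : n1 b ≤ lam * M :=
    (hflat B δ (card_pos.mp (hcard ▸ card_pos.mpr hA)) hδ).trans (by rw [← hcard]; gcongr)
  refine max_le ?_ ?_
  · calc n1 (τ • x + b) ≤ n1 (x + a) + n1 a + n1 b :=
          (Seminorm.of n1 hadd hsmul).map_smul_add_le hτabs x a b
      _ ≤ M + lam * M + lam * M := by gcongr; exact le_max_left _ _
      _ ≤ 3 * lam * M := by nlinarith
  · calc l2norm (τ • x + b) ≤ l2norm (x + a) :=
          l2norm_smul_add_sum_single_le hτabs hcard hAx hBx hε hδ
      _ ≤ M := le_max_right _ _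
      _ ≤ 3 * lam * M := le_mul_of_one_le_left hM (by linarith)

/-- Proposition 5.8: if `‖1_{δA}‖₁ ≤ λ√|A|`, then the norm
`max{‖·‖₁, ‖·‖_{ℓ₂}}` satisfies `(3λ)`-property (A, τ) for all `τ ∈ (0,1]`. -/
theorem stmt_11
    (n1 : (ℕ →₀ ℝ) → ℝ)
    (hadd : ∀ x y : ℕ →₀ ℝ, n1 (x + y) ≤ n1 x + n1 y)
    (hsmul : ∀ (a : ℝ) (x : ℕ →₀ ℝ), n1 (a • x) = |a| * n1 x)
    (lam : ℝ) (hlam : 1 ≤ lam)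
    (hflat : ∀ (A : Finset ℕ) (δ : ℕ → ℝ), A.Nonempty →
      (∀ n ∈ A, |δ n| = 1) →
      n1 (∑ n ∈ A, Finsupp.single n (δ n)) ≤ lam * Real.sqrt A.card)
    (τ : ℝ) (hτ : 0 < τ) (hτ1 : τ ≤ 1)
    (x : ℕ →₀ ℝ) (hx : ∀ k, |x k| ≤ 1 / τ)
    (A B : Finset ℕ) (hcard : A.card = B.card) (hA : A.Nonempty)
    (hAB : Disjoint A B) (hAx : ∀ n ∈ A, x n = 0) (hBx : ∀ n ∈ B, x n = 0)
    (ε δ : ℕ → ℝ) (hε : ∀ n ∈ A, |ε n| = 1) (hδ : ∀ n ∈ B, |δ n| = 1) :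
    max (n1 (τ • x + ∑ n ∈ B, Finsupp.single n (δ n)))
        (l2norm (τ • x + ∑ n ∈ B, Finsupp.single n (δ n)))
      ≤ 3 * lam *
        max (n1 (x + ∑ n ∈ A, Finsupp.single n (ε n)))
            (l2norm (x + ∑ n ∈ A, Finsupp.single n (ε n))) :=
  stmt_11_general n1 hadd hsmul lam hlam hflat τ hτ hτ1 x A B hcard hA hAx hBx ε δ hε hδ
end

section
/- Let X be a Banach space with Markushevich basis. Suppose there exist a function f: ℕ → (0,∞) and constants c₁, c₂ > 0 such that ‖1_{εΛ}‖ ≤ c₁ f(|Λ|) and ‖1_{εΛ} + x‖ ≥ c₂ f(|Λ|) for every nonempty finite Λ ⊂ ℕ, every sign (ε), and every x ∈ X with ‖x‖_∞ ≤ 1/τ and supp(x) ∩ Λ = ∅. Then the basis has (2τ+1)·c₁/c₂-property (A, τ): ‖τx + 1_{δB}‖ ≤ ((2τ+1)c₁/c₂)‖x + 1_{εA}‖ for all x with ‖x‖_∞ ≤ 1/τ, finite A, B with |A| = |B|, A, B, supp(x) pairwise disjoint, and signs (ε), (δ). -/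
/-!
Write `N = ‖x + 1_{εA}‖` and `F = f |A|`. The hypotheses give `‖1_{εA}‖, ‖1_{δB}‖ ≤ c₁ F` (using
`|A| = |B|`) and `c₂ F ≤ N`, and testing both on a singleton gives `c₂ ≤ c₁`. Then
`‖τx + 1_{δB}‖ ≤ τ (N + ‖1_{εA}‖) + ‖1_{δB}‖ ≤ τ N + (τ + 1) c₁ F`, and both terms are at most
`(c₁ / c₂)`-multiples of `τ N` and `(τ + 1) N`. For `A = ∅` the same estimate holds with `F = 0`.
-/

theorem norm_smul_add_le_of_norm_le {X : Type*} [SeminormedAddCommGroup X] [NormedSpace ℝ X]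
    {x a b : X} {τ c₁ c₂ F : ℝ} (hτ : 0 ≤ τ) (hc₂ : 0 < c₂) (hc : c₂ ≤ c₁)
    (ha : ‖a‖ ≤ c₁ * F) (hb : ‖b‖ ≤ c₁ * F) (hlow : c₂ * F ≤ ‖x + a‖) :
    ‖τ • x + b‖ ≤ (2 * τ + 1) * c₁ / c₂ * ‖x + a‖ := by
  set N := ‖x + a‖
  have hx : ‖x‖ ≤ N + ‖a‖ := by simpa using norm_sub_le (x + a) a
  have hratio : 1 ≤ c₁ / c₂ := (one_le_div hc₂).mpr hc
  have hF : c₁ * F ≤ c₁ / c₂ * N := by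
    calc c₁ * F = c₁ / c₂ * (c₂ * F) := by field_simp
      _ ≤ c₁ / c₂ * N := by gcongr
  calc ‖τ • x + b‖ ≤ τ * ‖x‖ + ‖b‖ := by
        simpa [norm_smul, abs_of_nonneg hτ] using norm_add_le (τ • x) b
    _ ≤ τ * N + (τ + 1) * (c₁ * F) := by
        linarith [mul_le_mul_of_nonneg_left hx hτ, mul_le_mul_of_nonneg_left ha hτ]
    _ ≤ τ * (c₁ / c₂ * N) + (τ + 1) * (c₁ / c₂ * N) := by
        gcongr
        exact le_mul_of_one_le_left (norm_nonneg _) hratio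
    _ = (2 * τ + 1) * c₁ / c₂ * N := by ring

theorem stmt_16_general
    {X : Type*} [NormedAddCommGroup X] [NormedSpace ℝ X]
    (e : ℕ → X) (fc : ℕ → X →L[ℝ] ℝ)
    (τ : ℝ) (hτ : 0 < τ)
    (f : ℕ → ℝ) (hf : ∀ n, 0 < f n)
    (c₁ c₂ : ℝ) (hc₂ : 0 < c₂)
    (hub : ∀ (Λ : Finset ℕ), Λ.Nonempty → ∀ ε : ℕ → ℝ,
      (∀ n ∈ Λ, |ε n| = 1) → ‖∑ n ∈ Λ, ε n • e n‖ ≤ c₁ * f Λ.card)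
    (hlb : ∀ (Λ : Finset ℕ), Λ.Nonempty → ∀ ε : ℕ → ℝ,
      (∀ n ∈ Λ, |ε n| = 1) → ∀ x : X, (∀ n, |fc n x| ≤ 1 / τ) →
      (∀ n ∈ Λ, fc n x = 0) →
      c₂ * f Λ.card ≤ ‖(∑ n ∈ Λ, ε n • e n) + x‖) :
    ∀ (x : X), (∀ n, |fc n x| ≤ 1 / τ) →
      ∀ (A B : Finset ℕ), A.card = B.card →
      (∀ n ∈ A, fc n x = 0) → (∀ n ∈ B, fc n x = 0) → Disjoint A B →
      ∀ ε δ : ℕ → ℝ, (∀ n ∈ A, |ε n| = 1) → (∀ n ∈ B, |δ n| = 1) →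
      ‖τ • x + ∑ n ∈ B, δ n • e n‖
        ≤ ((2 * τ + 1) * c₁ / c₂) * ‖x + ∑ n ∈ A, ε n • e n‖ := by
  intro x hx A B hcard hA _ _ ε δ hε hδ
  have hc : c₂ ≤ c₁ := by
    have hup := hub {0} (by simp) (fun _ => 1) (by simp)
    have hlow := hlb {0} (by simp) (fun _ => 1) (by simp) 0 (by simp [hτ.le]) (by simp)
    simp only [Finset.card_singleton, Finset.sum_singleton, one_smul, add_zero] at hup hlow
    exact le_of_mul_le_mul_right (hlow.trans hup) (hf 1)
  obtain ⟨F, hFA, hFB, hFlow⟩ : ∃ F, ‖∑ n ∈ A, ε n • e n‖ ≤ c₁ * F ∧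
      ‖∑ n ∈ B, δ n • e n‖ ≤ c₁ * F ∧ c₂ * F ≤ ‖x + ∑ n ∈ A, ε n • e n‖ := by
    rcases A.eq_empty_or_nonempty with rfl | hAne
    · obtain rfl : B = ∅ := Finset.card_eq_zero.mp hcard.symm
      exact ⟨0, by simp⟩
    · have hBne : B.Nonempty := Finset.card_pos.mp (hcard ▸ hAne.card_pos)
      refine ⟨f A.card, hub A hAne ε hε, hcard ▸ hub B hBne δ hδ, ?_⟩
      simpa [add_comm] using hlb A hAne ε hε x hx hA
  exact norm_smul_add_le_of_norm_le hτ.le hc₂ hc hFA hFB hFlow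

/-- Theorem 5.11, (2) ⇒ (1): the existence of `f`, `c₁`, `c₂` with
`‖1_{εΛ}‖ ≤ c₁ f(|Λ|)` and `‖1_{εΛ} + x‖ ≥ c₂ f(|Λ|)` implies
`((2τ+1)c₁/c₂)`-property (A, τ). -/
theorem stmt_16
    {X : Type*} [NormedAddCommGroup X] [NormedSpace ℝ X] [CompleteSpace X]
    (e : ℕ → X) (fc : ℕ → X →L[ℝ] ℝ)
    (hbi : ∀ i j, fc i (e j) = if i = j then (1 : ℝ) else 0)
    (htotal : ∀ x : X, (∀ n, fc n x = 0) → x = 0)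
    (hdense : Dense (Submodule.span ℝ (Set.range e) : Set X))
    (τ : ℝ) (hτ : 0 < τ) (hτ1 : τ ≤ 1)
    (f : ℕ → ℝ) (hf : ∀ n, 0 < f n)
    (c₁ c₂ : ℝ) (hc₁ : 0 < c₁) (hc₂ : 0 < c₂)
    (hub : ∀ (Λ : Finset ℕ), Λ.Nonempty → ∀ ε : ℕ → ℝ,
      (∀ n ∈ Λ, |ε n| = 1) → ‖∑ n ∈ Λ, ε n • e n‖ ≤ c₁ * f Λ.card)
    (hlb : ∀ (Λ : Finset ℕ), Λ.Nonempty → ∀ ε : ℕ → ℝ,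
      (∀ n ∈ Λ, |ε n| = 1) → ∀ x : X, (∀ n, |fc n x| ≤ 1 / τ) →
      (∀ n ∈ Λ, fc n x = 0) →
      c₂ * f Λ.card ≤ ‖(∑ n ∈ Λ, ε n • e n) + x‖) :
    ∀ (x : X), (∀ n, |fc n x| ≤ 1 / τ) →
      ∀ (A B : Finset ℕ), A.card = B.card →
      (∀ n ∈ A, fc n x = 0) → (∀ n ∈ B, fc n x = 0) → Disjoint A B →
      ∀ ε δ : ℕ → ℝ, (∀ n ∈ A, |ε n| = 1) → (∀ n ∈ B, |δ n| = 1) →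
      ‖τ • x + ∑ n ∈ B, δ n • e n‖
        ≤ ((2 * τ + 1) * c₁ / c₂) * ‖x + ∑ n ∈ A, ε n • e n‖ :=
  stmt_16_general e fc τ hτ f hf c₁ c₂ hc₂ hub hlb
end
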